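/- arXiv:2301.11817 — 7 statements merged into one kernel-verified Lean document; each statement's English description precedes it below -/
import Mathlib

section
/- Under the stated assumptions, for every N ≥ 0 the accelerated Nesterov iterates satisfy f_N(y_N) − f* ≤ ((L+μ)R²/2)·(1 − 1/√κ)^N and ‖y_N − x*‖² ≤ ((L+μ)R²/μ)·(1 − 1/√κ)^N, where R = ‖x_0 − x*‖. -/
/-!
Nesterov's estimate-sequence argument, with the Lyapunov function
`Φ k = f_k(y_k) - f* + μ/2 ‖z_k - x*‖²`, `z_k = x_k + √κ (x_k - y_k)`. The momentum rule makes
`z_{k+1} = (1 - 1/√κ) z_k + (1/√κ) x_k - ∇f_k(x_k) / (√κ μ)`. Expanding `μ/2 ‖z_{k+1} - x*‖²` with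
convexity of `‖·‖²`, and combining the gradient-step decrease
`f_k(y_{k+1}) ≤ f_k(x_k) - ‖∇f_k(x_k)‖² / (2L)` with strong convexity of `f_k` at `x_k` towards `x*`
and plain convexity towards `y_k`, gives `f_k(y_{k+1}) - f* + μ/2 ‖z_{k+1} - x*‖² ≤ (1 - 1/√κ) Φ k`;
then `f_{k+1} ≤ f_k` bounds `Φ (k+1)` by the left side. As `x*` minimizes every `f_k`,
`∇f_k(x*) = 0`, so `Φ 0 ≤ (L + μ) R²/2` by smoothness and `μ/2 ‖y_N - x*‖² ≤ f_N(y_N) - f*`.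
-/

open scoped RealInnerProductSpace

theorem nesterov_extrapolation_eq {E : Type*} [AddCommGroup E] [Module ℝ E] {s : ℝ}
    (hs : s + 1 ≠ 0) {x' y y' : E}
    (hx' : x' = (1 + (s - 1) / (s + 1)) • y' - ((s - 1) / (s + 1)) • y) :
    x' + s • (x' - y') = s • y' - (s - 1) • y := by
  subst hx'
  match_scalars <;> field_simp <;> ring

section Smooth

variable {E : Type*} [NormedAddCommGroup E] [InnerProductSpace ℝ E] [CompleteSpace E]
  {F : E → ℝ} {G : E → E} {L μ : ℝ}

theorem HasGradientAt.eq_zero_of_forall_le {x : E} (hF : HasGradientAt F (G x) x)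
    (hmin : ∀ y, F x ≤ F y) : G x = 0 := by
  simpa using IsLocalMin.hasFDerivAt_eq_zero (Filter.Eventually.of_forall hmin) hF.hasFDerivAt

theorem le_add_inner_add_of_lipschitz_gradient (hF : ∀ x, HasGradientAt F (G x) x)
    (hG : ∀ x y, ‖G y - G x‖ ≤ L * ‖y - x‖) (x y : E) :
    F y ≤ F x + ⟪G x, y - x⟫ + L / 2 * ‖y - x‖ ^ 2 := by
  set v := y - x
  let φ : ℝ → ℝ := fun t => F (x + t • v) - t * ⟪G x, v⟫ - L / 2 * t ^ 2 * ‖v‖ ^ 2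
  have hφ : ∀ t, HasDerivAt φ (⟪G (x + t • v), v⟫ - ⟪G x, v⟫ - L * t * ‖v‖ ^ 2) t := by
    intro t
    have hline : HasDerivAt (fun t : ℝ => x + t • v) v t := by
      simpa using ((hasDerivAt_id t).smul_const v).const_add x
    have hquad := ((hasDerivAt_pow 2 t).const_mul (L / 2)).mul_const (‖v‖ ^ 2)
    refine ((((hF _).hasFDerivAt.comp_hasDerivAt t hline).sub
      ((hasDerivAt_id t).mul_const ⟪G x, v⟫)).sub hquad).congr_deriv ?_
    simp only [InnerProductSpace.toDual_apply_apply]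
    push_cast
    ring
  have hanti : AntitoneOn φ (Set.Ici 0) := by
    refine antitoneOn_of_hasDerivWithinAt_nonpos (convex_Ici 0)
      (fun t _ => (hφ t).continuousAt.continuousWithinAt) (fun t _ => (hφ t).hasDerivWithinAt) ?_
    intro t ht
    rw [interior_Ici] at ht
    have hlip : ‖G (x + t • v) - G x‖ ≤ L * (t * ‖v‖) := by
      simpa [norm_smul, abs_of_pos (Set.mem_Ioi.1 ht)] using hG x (x + t • v)
    have hcs := real_inner_le_norm (G (x + t • v) - G x) v
    rw [inner_sub_left] at hcs
    nlinarith [norm_nonneg v]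
  have h01 := hanti Set.self_mem_Ici (show (0:ℝ) ≤ 1 from zero_le_one) zero_le_one
  simp only [φ, one_smul, one_pow, mul_one, zero_smul, add_zero, zero_mul, sub_zero, ne_eq,
    OfNat.ofNat_ne_zero, not_false_eq_true, zero_pow, mul_zero, add_sub_cancel, v] at h01
  linarith

theorem le_sub_of_gradient_step (hF : ∀ x, HasGradientAt F (G x) x)
    (hG : ∀ x y, ‖G y - G x‖ ≤ L * ‖y - x‖) (hL : 0 < L) (x : E) :
    F (x - (1 / L) • G x) ≤ F x - 1 / (2 * L) * ‖G x‖ ^ 2 := by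
  have h := le_add_inner_add_of_lipschitz_gradient hF hG x (x - (1 / L) • G x)
  rw [sub_sub_cancel_left, inner_neg_right, norm_neg, real_inner_smul_right,
    real_inner_self_eq_norm_sq, norm_smul, Real.norm_of_nonneg (by positivity)] at h
  convert h using 1
  field_simp
  ring

/-- `x + s • (x - y)` and `s • y' - (s - 1) • y` are the centres `z_k`, `z_{k+1}`. -/
theorem nesterov_potential_step (hF : ∀ x, HasGradientAt F (G x) x)
    (hG : ∀ x y, ‖G y - G x‖ ≤ L * ‖y - x‖)
    (hconv : ∀ x y, F x + ⟪G x, y - x⟫ + μ / 2 * ‖y - x‖ ^ 2 ≤ F y)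
    {s : ℝ} (hμ : 0 < μ) (hs : 1 ≤ s) (hLs : μ * s ^ 2 = L) (x y y' xs : E)
    (hy' : y' = x - (1 / L) • G x) :
    F y' - F xs + μ / 2 * ‖s • y' - (s - 1) • y - xs‖ ^ 2 ≤
      (1 - 1 / s) * (F y - F xs + μ / 2 * ‖x + s • (x - y) - xs‖ ^ 2) := by
  have hs₀ : 0 < s := by linarith
  have hτ : 0 ≤ 1 - 1 / s := by rw [sub_nonneg, div_le_one hs₀]; exact hs
  have hL : 0 < L := by rw [← hLs]; positivity
  set a := (x - xs) + (s - 1) • (x - y)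
  have hw : s • y' - (s - 1) • y - xs = a - (1 / (s * μ)) • G x := by
    rw [hy', ← hLs]
    match_scalars <;> field_simp
    ring
  have ha : a = (1 - 1 / s) • (x + s • (x - y) - xs) + (1 / s) • (x - xs) := by
    match_scalars <;> field_simp <;> ring
  have hnorm_a : ‖a‖ ^ 2 ≤ (1 - 1 / s) * ‖x + s • (x - y) - xs‖ ^ 2 + 1 / s * ‖x - xs‖ ^ 2 := by
    rw [ha]
    exact (convexOn_univ_norm.pow (fun _ _ => norm_nonneg _) 2).2 trivial trivial hτ
      (by positivity) (by ring)
  have hnorm_w : ‖a - (1 / (s * μ)) • G x‖ ^ 2 =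
      ‖a‖ ^ 2 - 2 * (1 / (s * μ)) * (⟪G x, x - xs⟫ + (s - 1) * ⟪G x, x - y⟫) +
        (1 / (s * μ)) ^ 2 * ‖G x‖ ^ 2 := by
    rw [norm_sub_sq_real, real_inner_smul_right, norm_smul, Real.norm_of_nonneg (by positivity),
      inner_add_left, real_inner_smul_left, real_inner_comm, real_inner_comm (x - y)]
    ring
  have hdesc := le_sub_of_gradient_step hF hG hL x
  have hstrong := hconv x xs
  rw [← neg_sub x xs, inner_neg_right, norm_neg] at hstrong
  have hgrad : F x - ⟪G x, x - y⟫ ≤ F y := by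
    have := hconv x y
    rw [← neg_sub x y, inner_neg_right] at this
    linarith [show 0 ≤ μ / 2 * ‖-(x - y)‖ ^ 2 by positivity]
  rw [hw, hnorm_w, hy']
  linear_combination (norm := skip) hdesc + μ / 2 * hnorm_a +
    mul_le_mul_of_nonneg_left hstrong (one_div_nonneg.2 hs₀.le) +
    mul_le_mul_of_nonneg_left hgrad hτ
  refine le_of_eq ?_
  rw [← hLs]
  field_simp
  ring

end Smooth

/-- Convergence of accelerated Nesterov's method run over a uniformly
non-increasing sequence of `L`-smooth `μ`-strongly convex functions with a common
minimizer `x*` and common minimal value `f*`: for every `N`,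
`f_N(y_N) − f* ≤ ((L+μ)R²/2)·(1 − 1/√κ)^N` and
`‖y_N − x*‖² ≤ ((L+μ)R²/μ)·(1 − 1/√κ)^N`, where `κ = L/μ` and `R = ‖x₀ − x*‖`. -/
theorem nesterov_time_varying_convergence
    {d : ℕ} (L μ : ℝ) (hμ : 0 < μ) (hμL : μ < L)
    (f : ℕ → EuclideanSpace ℝ (Fin d) → ℝ)
    (g : ℕ → EuclideanSpace ℝ (Fin d) → EuclideanSpace ℝ (Fin d))
    (hgrad : ∀ k x, HasGradientAt (f k) (g k x) x)
    (hsmooth : ∀ k x y, ‖g k y - g k x‖ ≤ L * ‖y - x‖)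
    (hstrong : ∀ k x y, f k x + ⟪g k x, y - x⟫ + μ / 2 * ‖y - x‖ ^ 2 ≤ f k y)
    (hmono : ∀ k x, f (k + 1) x ≤ f k x)
    (xstar : EuclideanSpace ℝ (Fin d)) (fstar : ℝ)
    (hmin : ∀ k x, f k xstar ≤ f k x) (hval : ∀ k, f k xstar = fstar)
    (κ : ℝ) (hκ : κ = L / μ)
    (x0 : EuclideanSpace ℝ (Fin d)) (x y : ℕ → EuclideanSpace ℝ (Fin d))
    (hx0 : x 0 = x0) (hy0 : y 0 = x0)
    (hyup : ∀ k, y (k + 1) = x k - (1 / L) • g k (x k))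
    (hxup : ∀ k, x (k + 1) =
      (1 + (Real.sqrt κ - 1) / (Real.sqrt κ + 1)) • y (k + 1)
        - ((Real.sqrt κ - 1) / (Real.sqrt κ + 1)) • y k)
    (R : ℝ) (hR : R = ‖x0 - xstar‖) :
    ∀ N : ℕ,
      f N (y N) - fstar ≤ (L + μ) * R ^ 2 / 2 * (1 - 1 / Real.sqrt κ) ^ N ∧
      ‖y N - xstar‖ ^ 2 ≤ (L + μ) * R ^ 2 / μ * (1 - 1 / Real.sqrt κ) ^ N := by
  intro N
  set s := Real.sqrt κ
  have hs : 1 ≤ s := Real.one_le_sqrt.2 (by rw [hκ, one_le_div hμ]; exact hμL.le)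
  have hLs : μ * s ^ 2 = L := by
    rw [Real.sq_sqrt (by rw [hκ]; exact div_nonneg (hμ.trans hμL).le hμ.le), hκ]
    field_simp
  have hτ : 0 ≤ 1 - 1 / s := by rw [sub_nonneg, div_le_one (by positivity)]; exact hs
  have hg0 : ∀ k, g k xstar = 0 := fun k => (hgrad k xstar).eq_zero_of_forall_le (hmin k)
  let Φ : ℕ → ℝ := fun k => f k (y k) - fstar + μ / 2 * ‖x k + s • (x k - y k) - xstar‖ ^ 2
  have hΦ0 : Φ 0 ≤ (L + μ) * R ^ 2 / 2 := by
    have := le_add_inner_add_of_lipschitz_gradient (hgrad 0) (hsmooth 0) xstar x0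
    simp only [Φ, hx0, hy0, hR, hg0, hval, inner_zero_left, add_zero, sub_self, smul_zero]
      at this ⊢
    linarith
  have hstep : ∀ k, Φ (k + 1) ≤ (1 - 1 / s) * Φ k := by
    intro k
    have := nesterov_potential_step (hgrad k) (hsmooth k) (hstrong k) hμ hs hLs
      (x k) (y k) (y (k + 1)) xstar (hyup k)
    rw [← nesterov_extrapolation_eq (by linarith : 0 < s + 1).ne' (hxup k), hval k] at this
    have := hmono k (y (k + 1))
    simp only [Φ]
    linarith
  have hΦN : Φ N ≤ (L + μ) * R ^ 2 / 2 * (1 - 1 / s) ^ N :=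
    (le_geom hτ N fun k _ => hstep k).trans <| by
      rw [mul_comm]
      exact mul_le_mul_of_nonneg_right hΦ0 (pow_nonneg hτ N)
  have hfN : f N (y N) - fstar ≤ (L + μ) * R ^ 2 / 2 * (1 - 1 / s) ^ N :=
    (le_add_of_nonneg_right (by positivity)).trans hΦN
  have hgap : μ / 2 * ‖y N - xstar‖ ^ 2 ≤ f N (y N) - fstar := by
    have := hstrong N xstar (y N)
    rw [hg0, hval, inner_zero_left, add_zero] at this
    linarith
  refine ⟨hfN, ?_⟩
  rw [div_mul_eq_mul_div, le_div_iff₀ hμ]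
  linarith
end

section
/- The potential Ψ_k = (1+γ)^k·( f_k(y_k) − f* + (μ/2)·‖z_k − x*‖² ) is non-increasing: Ψ_{k+1} − Ψ_k ≤ 0 for every k ≥ 0. -/
open scoped RealInnerProductSpace

/-! With `s = √κ` and `θ = 1/s`, one step of the method is the gradient step `y' = x - ∇f(x)/L`
together with `z' - x* = (1-θ)(z - x*) + θ(x - x*) - (θ/μ)∇f(x)`. Convexity of `‖·‖²` and the
descent lemma (which pays for the `‖∇f(x)‖²` term of the expanded square) bound the new
potential by strong convexity at `x`, evaluated at `y` with weight `1-θ` and at `x*` with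
weight `θ`; this gives the contraction factor `1-θ = (1+γ)⁻¹`. Monotonicity in `k` lets
`f_{k+1}` replace `f_k`. -/

variable {E : Type*} [NormedAddCommGroup E] [InnerProductSpace ℝ E]

theorem sq_norm_convex_combination_le (a b : E) {θ : ℝ} (h0 : 0 ≤ θ) (h1 : θ ≤ 1) :
    ‖(1 - θ) • a + θ • b‖ ^ 2 ≤ (1 - θ) * ‖a‖ ^ 2 + θ * ‖b‖ ^ 2 :=
  ((convexOn_norm convex_univ).pow (fun _ _ ↦ norm_nonneg _) 2).2 (Set.mem_univ a)
    (Set.mem_univ b) (by linarith) h0 (by ring)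

theorem nesterov_dist_sq_le {μ s : ℝ} (hμ : 0 < μ) (hs : 1 ≤ s) {x y z z' G : E} (xstar : E)
    (hz : z = (s + 1) • x - s • y) (hz' : z' = s • (x - (μ * s ^ 2)⁻¹ • G) - (s - 1) • y) :
    μ / 2 * ‖z' - xstar‖ ^ 2 ≤ (1 - s⁻¹) * (μ / 2 * ‖z - xstar‖ ^ 2 - ⟪G, x - y⟫)
      + s⁻¹ * (μ / 2 * ‖x - xstar‖ ^ 2 - ⟪G, x - xstar⟫) + (2 * (μ * s ^ 2))⁻¹ * ‖G‖ ^ 2 := by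
  have hs0 : 0 < s := by linarith
  set w := (1 - s⁻¹) • (z - xstar) + s⁻¹ • (x - xstar) with hw_def
  have hz'w : z' - xstar = w - (μ * s)⁻¹ • G := by
    rw [hw_def, hz', hz]; match_scalars <;> field_simp <;> ring
  have hw : w = (s - 1) • (x - y) + (x - xstar) := by
    rw [hw_def, hz]; match_scalars <;> field_simp <;> ring
  have hwG : ⟪w, G⟫ = (s - 1) * ⟪G, x - y⟫ + ⟪G, x - xstar⟫ := by
    rw [hw, inner_add_left, real_inner_smul_left, real_inner_comm, real_inner_comm G]
  have hwn : μ / 2 * ‖w‖ ^ 2 ≤ μ / 2 * ((1 - s⁻¹) * ‖z - xstar‖ ^ 2 + s⁻¹ * ‖x - xstar‖ ^ 2) :=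
    mul_le_mul_of_nonneg_left
      (sq_norm_convex_combination_le _ _ (by positivity) (inv_le_one_of_one_le₀ hs))
      (by positivity)
  have h_inner : μ / 2 * (2 * ((μ * s)⁻¹ * ((s - 1) * ⟪G, x - y⟫ + ⟪G, x - xstar⟫)))
      = (1 - s⁻¹) * ⟪G, x - y⟫ + s⁻¹ * ⟪G, x - xstar⟫ := by
    field_simp
  have h_grad : μ / 2 * ((μ * s)⁻¹ ^ 2 * ‖G‖ ^ 2) = (2 * (μ * s ^ 2))⁻¹ * ‖G‖ ^ 2 := by
    field_simp
  rw [hz'w, norm_sub_sq_real, real_inner_smul_right, norm_smul, hwG, Real.norm_eq_abs,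
    abs_of_pos (by positivity), mul_pow]
  linarith

variable [CompleteSpace E] {f : E → ℝ} {g : E → E} {L : ℝ}

theorem le_add_inner_add_sq_of_lipschitz_gradient (hgrad : ∀ x, HasGradientAt f (g x) x)
    (hsmooth : ∀ x y, ‖g y - g x‖ ≤ L * ‖y - x‖) (x y : E) :
    f y ≤ f x + ⟪g x, y - x⟫ + L / 2 * ‖y - x‖ ^ 2 := by
  set v := y - x
  let φ : ℝ → ℝ := fun t ↦ f (x + t • v) - (t * ⟪g x, v⟫ + L / 2 * t ^ 2 * ‖v‖ ^ 2)
  have hφ : ∀ t, HasDerivAt φ (⟪g (x + t • v), v⟫ - ⟪g x, v⟫ - L * t * ‖v‖ ^ 2) t := by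
    intro t
    have hline : HasDerivAt (fun t : ℝ ↦ x + t • v) v t := by
      simpa using ((hasDerivAt_id t).smul_const v).const_add x
    refine (((hgrad _).hasFDerivAt.comp_hasDerivAt t hline).sub
      (((hasDerivAt_id t).mul_const ⟪g x, v⟫).add
        (((hasDerivAt_pow 2 t).const_mul (L / 2)).mul_const (‖v‖ ^ 2)))).congr_deriv ?_
    simp only [InnerProductSpace.toDual_apply_apply]
    ring
  have hanti : AntitoneOn φ (Set.Icc 0 1) := by
    refine antitoneOn_of_hasDerivWithinAt_nonpos (convex_Icc 0 1)
      (fun t _ ↦ (hφ t).continuousAt.continuousWithinAt) (fun t _ ↦ (hφ t).hasDerivWithinAt) ?_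
    intro t ht
    rw [interior_Icc] at ht
    have hlip : ‖g (x + t • v) - g x‖ ≤ L * (t * ‖v‖) := by
      simpa [norm_smul, abs_of_pos ht.1] using hsmooth x (x + t • v)
    calc ⟪g (x + t • v), v⟫ - ⟪g x, v⟫ - L * t * ‖v‖ ^ 2
        = ⟪g (x + t • v) - g x, v⟫ - L * (t * ‖v‖) * ‖v‖ := by rw [inner_sub_left]; ring
      _ ≤ ‖g (x + t • v) - g x‖ * ‖v‖ - L * (t * ‖v‖) * ‖v‖ := by
        gcongr; exact real_inner_le_norm _ _
      _ ≤ 0 := sub_nonpos.mpr (mul_le_mul_of_nonneg_right hlip (norm_nonneg v))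
  have h01 := hanti (by norm_num : (0 : ℝ) ∈ Set.Icc 0 1) (by norm_num : (1 : ℝ) ∈ Set.Icc 0 1)
    zero_le_one
  simp only [φ, v, zero_smul, add_zero, one_smul, add_sub_cancel, zero_mul, one_pow, mul_one,
    one_mul] at h01
  linarith

theorem apply_gradient_step_le (hgrad : ∀ x, HasGradientAt f (g x) x)
    (hsmooth : ∀ x y, ‖g y - g x‖ ≤ L * ‖y - x‖) (x : E) :
    f (x - L⁻¹ • g x) ≤ f x - (2 * L)⁻¹ * ‖g x‖ ^ 2 := by
  have h := le_add_inner_add_sq_of_lipschitz_gradient hgrad hsmooth x (x - L⁻¹ • g x)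
  rw [sub_sub_cancel_left, inner_neg_right, real_inner_smul_right, norm_neg, norm_smul,
    real_inner_self_eq_norm_sq, Real.norm_eq_abs, mul_pow, sq_abs] at h
  rcases eq_or_ne L 0 with rfl | hL
  · simp
  · convert h using 1
    field_simp
    ring

theorem nesterov_potential_step_le {μ s : ℝ} (hgrad : ∀ x, HasGradientAt f (g x) x)
    (hsmooth : ∀ x y, ‖g y - g x‖ ≤ L * ‖y - x‖)
    (hstrong : ∀ x y, f x + ⟪g x, y - x⟫ + μ / 2 * ‖y - x‖ ^ 2 ≤ f y)
    (hμ : 0 < μ) (hs : 1 ≤ s) (hL : L = μ * s ^ 2) {x y y' z z' : E} (xstar : E)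
    (hy' : y' = x - L⁻¹ • g x) (hz : z = (s + 1) • x - s • y)
    (hz' : z' = s • y' - (s - 1) • y) :
    f y' - f xstar + μ / 2 * ‖z' - xstar‖ ^ 2
      ≤ (1 - s⁻¹) * (f y - f xstar + μ / 2 * ‖z - xstar‖ ^ 2) := by
  subst hL hy'
  have descent := apply_gradient_step_le hgrad hsmooth x
  have dist := nesterov_dist_sq_le hμ hs xstar hz hz'
  have toward_y : f x - ⟪g x, x - y⟫ ≤ f y := by
    have h := hstrong x y
    rw [← neg_sub x y, inner_neg_right] at h
    linarith [(by positivity : 0 ≤ μ / 2 * ‖-(x - y)‖ ^ 2)]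
  have toward_xstar : f x - ⟪g x, x - xstar⟫ + μ / 2 * ‖x - xstar‖ ^ 2 ≤ f xstar := by
    have := hstrong x xstar
    rwa [← neg_sub x xstar, inner_neg_right, norm_neg, ← sub_eq_add_neg] at this
  have hθ : 0 ≤ s⁻¹ := by positivity
  have hθ' : 0 ≤ 1 - s⁻¹ := sub_nonneg.mpr (inv_le_one_of_one_le₀ hs)
  linarith [mul_le_mul_of_nonneg_left toward_y hθ', mul_le_mul_of_nonneg_left toward_xstar hθ]

theorem nesterov_potential_nonincreasing_general
    {d : ℕ} (L μ : ℝ) (hμ : 0 < μ) (hμL : μ < L)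
    (f : ℕ → EuclideanSpace ℝ (Fin d) → ℝ)
    (g : ℕ → EuclideanSpace ℝ (Fin d) → EuclideanSpace ℝ (Fin d))
    (hgrad : ∀ k x, HasGradientAt (f k) (g k x) x)
    (hsmooth : ∀ k x y, ‖g k y - g k x‖ ≤ L * ‖y - x‖)
    (hstrong : ∀ k x y, f k x + ⟪g k x, y - x⟫ + μ / 2 * ‖y - x‖ ^ 2 ≤ f k y)
    (hmono : ∀ k x, f (k + 1) x ≤ f k x)
    (xstar : EuclideanSpace ℝ (Fin d)) (fstar : ℝ)
    (hval : ∀ k, f k xstar = fstar)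
    (κ : ℝ) (hκ : κ = L / μ)
    (x y : ℕ → EuclideanSpace ℝ (Fin d))
    (hyup : ∀ k, y (k + 1) = x k - (1 / L) • g k (x k))
    (hxup : ∀ k, x (k + 1) =
      (1 + (Real.sqrt κ - 1) / (Real.sqrt κ + 1)) • y (k + 1)
        - ((Real.sqrt κ - 1) / (Real.sqrt κ + 1)) • y k)
    (τ γ : ℝ) (hτ : τ = 1 / (Real.sqrt κ + 1)) (hγ : γ = 1 / (Real.sqrt κ - 1))
    (z : ℕ → EuclideanSpace ℝ (Fin d))
    (hz : ∀ k, z k = (1 / τ) • x k - ((1 - τ) / τ) • y k)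
    (Ψ : ℕ → ℝ)
    (hΨ : ∀ k, Ψ k = (1 + γ) ^ k * (f k (y k) - fstar + μ / 2 * ‖z k - xstar‖ ^ 2)) :
    ∀ k : ℕ, Ψ (k + 1) - Ψ k ≤ 0 := by
  intro k
  set s := Real.sqrt κ
  have hκ1 : 1 < κ := by rw [hκ, lt_div_iff₀ hμ]; linarith
  have hs : 1 < s := Real.lt_sqrt_of_sq_lt (by simpa using hκ1)
  have hL : L = μ * s ^ 2 := by rw [Real.sq_sqrt (by linarith), hκ]; field_simp
  have hz_eq : ∀ k, z k = (s + 1) • x k - s • y k := fun k ↦ by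
    rw [hz, hτ]; match_scalars <;> field_simp; ring
  have hz_succ : z (k + 1) = s • y (k + 1) - (s - 1) • y k := by
    rw [hz, hxup, hτ]; match_scalars <;> field_simp; ring
  have step := nesterov_potential_step_le (hgrad k) (hsmooth k) (hstrong k) hμ hs.le hL xstar
    (by rw [hyup, one_div]) (hz_eq k) hz_succ
  have hs1 : 0 < s - 1 := by linarith
  have hγ_pos : 0 < 1 + γ := by rw [hγ]; positivity
  have hrate : (1 + γ) * (1 - s⁻¹) = 1 := by
    rw [hγ]; field_simp [hs1.ne']; ring
  rw [hΨ, hΨ, ← hval k, sub_nonpos]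
  calc (1 + γ) ^ (k + 1) * (f (k + 1) (y (k + 1)) - f k xstar + μ / 2 * ‖z (k + 1) - xstar‖ ^ 2)
      ≤ (1 + γ) ^ (k + 1) * (f k (y (k + 1)) - f k xstar + μ / 2 * ‖z (k + 1) - xstar‖ ^ 2) := by
        gcongr; exact hmono k _
    _ ≤ (1 + γ) ^ (k + 1) * ((1 - s⁻¹) * (f k (y k) - f k xstar + μ / 2 * ‖z k - xstar‖ ^ 2)) := by
        gcongr
    _ = (1 + γ) ^ k * (f k (y k) - f k xstar + μ / 2 * ‖z k - xstar‖ ^ 2) := by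
        rw [pow_succ, mul_assoc, ← mul_assoc (1 + γ), hrate, one_mul]

/-- For the accelerated Nesterov iteration over a uniformly non-increasing
sequence of `L`-smooth `μ`-strongly convex functions with common minimizer `x*` and
common minimal value `f*`, the potential
`Ψ_k = (1+γ)^k·(f_k(y_k) − f* + (μ/2)‖z_k − x*‖²)` is non-increasing, where
`τ = 1/(√κ+1)`, `γ = 1/(√κ−1)`, `κ = L/μ` and `z_k = (1/τ)x_k − ((1−τ)/τ)y_k`. -/
theorem nesterov_potential_nonincreasing
    {d : ℕ} (L μ : ℝ) (hμ : 0 < μ) (hμL : μ < L)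
    (f : ℕ → EuclideanSpace ℝ (Fin d) → ℝ)
    (g : ℕ → EuclideanSpace ℝ (Fin d) → EuclideanSpace ℝ (Fin d))
    (hgrad : ∀ k x, HasGradientAt (f k) (g k x) x)
    (hsmooth : ∀ k x y, ‖g k y - g k x‖ ≤ L * ‖y - x‖)
    (hstrong : ∀ k x y, f k x + ⟪g k x, y - x⟫ + μ / 2 * ‖y - x‖ ^ 2 ≤ f k y)
    (hmono : ∀ k x, f (k + 1) x ≤ f k x)
    (xstar : EuclideanSpace ℝ (Fin d)) (fstar : ℝ)
    (hmin : ∀ k x, f k xstar ≤ f k x) (hval : ∀ k, f k xstar = fstar)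
    (κ : ℝ) (hκ : κ = L / μ)
    (x0 : EuclideanSpace ℝ (Fin d)) (x y : ℕ → EuclideanSpace ℝ (Fin d))
    (hx0 : x 0 = x0) (hy0 : y 0 = x0)
    (hyup : ∀ k, y (k + 1) = x k - (1 / L) • g k (x k))
    (hxup : ∀ k, x (k + 1) =
      (1 + (Real.sqrt κ - 1) / (Real.sqrt κ + 1)) • y (k + 1)
        - ((Real.sqrt κ - 1) / (Real.sqrt κ + 1)) • y k)
    (τ γ : ℝ) (hτ : τ = 1 / (Real.sqrt κ + 1)) (hγ : γ = 1 / (Real.sqrt κ - 1))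
    (z : ℕ → EuclideanSpace ℝ (Fin d))
    (hz : ∀ k, z k = (1 / τ) • x k - ((1 - τ) / τ) • y k)
    (Ψ : ℕ → ℝ)
    (hΨ : ∀ k, Ψ k = (1 + γ) ^ k * (f k (y k) - fstar + μ / 2 * ‖z k - xstar‖ ^ 2)) :
    ∀ k : ℕ, Ψ (k + 1) - Ψ k ≤ 0 :=
  nesterov_potential_nonincreasing_general L μ hμ hμL f g hgrad hsmooth hstrong hmono xstar fstar
    hval κ hκ x y hyup hxup τ γ hτ hγ z hz Ψ hΨ
end

section
/- The potential Ψ_k = (1+γ)^k·( h_k(y^k) + (λ_min⁺/2)·‖z^k − x̄‖² ) is non-increasing along the accelerated gossip iteration: Ψ_{k+1} − Ψ_k ≤ 0 for every k ≥ 0, where τ = 1/(√χ+1), γ = 1/(√χ−1), and z^k = (1/τ)·x^k − ((1−τ)/τ)·y^k. -/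
open Matrix

/-!
The iteration is Nesterov's accelerated gradient method on the quadratics `h_k`, with condition
number `χ = s²`. Since `Ĝ ⊆ Ĝ_k ⊆ G_k`, each `h_k` is `λmax`-smooth, and it is `λmin`-strongly
convex around `x̄` along the iterates, because the iteration preserves the sum of the entries
and `L(Ĝ_k) x̄ = 0`. The standard Lyapunov argument for accelerated gradient descent then gives
`h_k(y^{k+1}) + (λmin/2)‖z^{k+1} − x̄‖² ≤ (1 − 1/s)·(h_k(y^k) + (λmin/2)‖z^k − x̄‖²)`, and
`h_{k+1} ≤ h_k` because the edge sets of the `Ĝ_k` shrink. Finally `(1 + γ)(1 − 1/s) = 1`.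
-/

section Potential

variable {ι : Type*} [Fintype ι]

theorem nesterov_potential_step_s3 {x y xbar g : ι → ℝ} {fNext fx fy μ s η : ℝ}
    (hμ : 0 ≤ μ) (hs : 1 < s) (hη : η * (s ^ 2 * μ) = 1)
    (hdescent : fNext ≤ fx - η / 2 * (g ⬝ᵥ g))
    (hconvex : fx + g ⬝ᵥ (y - x) ≤ fy)
    (hstrong : fx + μ / 2 * ((x - xbar) ⬝ᵥ (x - xbar)) ≤ g ⬝ᵥ (x - xbar)) :
    fNext + μ / 2 * ((s • (x - η • g) - (s - 1) • y - xbar) ⬝ᵥ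
        (s • (x - η • g) - (s - 1) • y - xbar))
      ≤ (1 - s⁻¹) *
        (fy + μ / 2 * (((s + 1) • x - s • y - xbar) ⬝ᵥ ((s + 1) • x - s • y - xbar))) := by
  set a := x - xbar
  set b := y - xbar
  have hnext : s • (x - η • g) - (s - 1) • y - xbar = s • a - (s - 1) • b - (s * η) • g := by
    simp only [a, b]; module
  have hcur : (s + 1) • x - s • y - xbar = (s + 1) • a - s • b := by
    simp only [a, b]; module
  have hyx : y - x = b - a := by simp only [a, b]; abel
  have hab : 0 ≤ (a - b) ⬝ᵥ (a - b) := by simpa using dotProduct_star_self_nonneg (a - b)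
  have hst : s⁻¹ * s = 1 := inv_mul_cancel₀ (by positivity)
  have hconvex' := mul_le_mul_of_nonneg_left hconvex (sub_nonneg.2 (inv_le_one_of_one_le₀ hs.le))
  have hab' := mul_nonneg (mul_nonneg hμ (sub_nonneg.2 hs.le)) hab
  rw [hnext, hcur]
  rw [hyx] at hconvex'
  simp only [dotProduct_sub, sub_dotProduct, dotProduct_smul, smul_dotProduct, smul_eq_mul,
    dotProduct_comm b a, dotProduct_comm a g, dotProduct_comm b g] at hab' hconvex' ⊢
  -- weights: descent + (1 - 1/s)·convexity + (1/s)·strong convexity + (μ(s - 1)/2)·‖x - y‖²;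
  -- `hη` and `hst` absorb the remaining terms
  linear_combination hdescent + hconvex' + s⁻¹ * hstrong + hab' / 2
    + (η / 2 * (g ⬝ᵥ g) - g ⬝ᵥ a + (1 - s⁻¹) * (g ⬝ᵥ b)) * hη
    + (μ * s * η * (g ⬝ᵥ b) + μ / 2 * (s + 2) * (a ⬝ᵥ a) - μ * (s + 1) * (a ⬝ᵥ b)
      + μ * s / 2 * (b ⬝ᵥ b)) * hst

theorem sum_nesterov_iterate_eq {W : ℕ → Matrix ι ι ℝ} (hW : ∀ k v, ∑ i, (W k *ᵥ v) i = 0)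
    {η β : ℝ} {x y : ℕ → ι → ℝ} (hy0 : y 0 = x 0)
    (hyup : ∀ k, y (k + 1) = x k - η • W k *ᵥ x k)
    (hxup : ∀ k, x (k + 1) = (1 + β) • y (k + 1) - β • y k) (k : ℕ) :
    ∑ i, x k i = ∑ i, x 0 i ∧ ∑ i, y k i = ∑ i, x 0 i := by
  induction k with
  | zero => exact ⟨rfl, by rw [hy0]⟩
  | succ k ih =>
    have hy : ∑ i, y (k + 1) i = ∑ i, x 0 i := by
      simp [hyup, Finset.sum_sub_distrib, ← Finset.mul_sum, hW, ih.1]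
    refine ⟨?_, hy⟩
    simp only [hxup, Pi.sub_apply, Pi.smul_apply, smul_eq_mul, Finset.sum_sub_distrib,
      ← Finset.mul_sum, hy, ih.2]
    ring

end Potential

theorem pow_succ_mul_le_pow_mul {a r u v : ℝ} (ha : 0 ≤ a) (har : a * r = 1) (huv : u ≤ r * v)
    (k : ℕ) : a ^ (k + 1) * u ≤ a ^ k * v := by
  calc a ^ (k + 1) * u = a ^ k * (a * u) := by ring
    _ ≤ a ^ k * (a * (r * v)) := by gcongr
    _ = a ^ k * v := by rw [← mul_assoc a, har, one_mul]

namespace Matrix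

variable {ι : Type*} [Fintype ι] {A : Matrix ι ι ℝ}

theorem IsSymm.dotProduct_mulVec_comm (hA : A.IsSymm) (a b : ι → ℝ) :
    a ⬝ᵥ A *ᵥ b = b ⬝ᵥ A *ᵥ a := by
  simpa only [hA.eq] using dotProduct_transpose_mulVec A a b

theorem IsSymm.add_dotProduct_mulVec_add (hA : A.IsSymm) (a b : ι → ℝ) :
    (a + b) ⬝ᵥ A *ᵥ (a + b) = a ⬝ᵥ A *ᵥ a + 2 * (b ⬝ᵥ A *ᵥ a) + b ⬝ᵥ A *ᵥ b := by
  rw [mulVec_add, dotProduct_add, add_dotProduct, add_dotProduct, hA.dotProduct_mulVec_comm a b]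
  ring

theorem IsSymm.dotProduct_mulVec_gradient_step_le (hA : A.IsSymm) {L : ℝ} (hL : 0 < L)
    (x : ι → ℝ) (hsmooth : (A *ᵥ x) ⬝ᵥ A *ᵥ (A *ᵥ x) ≤ L * ((A *ᵥ x) ⬝ᵥ (A *ᵥ x))) :
    (x - L⁻¹ • A *ᵥ x) ⬝ᵥ A *ᵥ (x - L⁻¹ • A *ᵥ x)
      ≤ x ⬝ᵥ A *ᵥ x - L⁻¹ * ((A *ᵥ x) ⬝ᵥ (A *ᵥ x)) := by
  rw [sub_eq_add_neg, hA.add_dotProduct_mulVec_add]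
  simp only [neg_dotProduct, mulVec_neg, dotProduct_neg, smul_dotProduct, mulVec_smul,
    dotProduct_smul, smul_eq_mul]
  have h := mul_le_mul_of_nonneg_left hsmooth (sq_nonneg L⁻¹)
  rw [← mul_assoc, show L⁻¹ ^ 2 * L = L⁻¹ by field_simp] at h
  linarith

theorem PosSemidef.dotProduct_mulVec_tangent_le (hA : A.PosSemidef) (x y : ι → ℝ) :
    x ⬝ᵥ A *ᵥ x + 2 * ((A *ᵥ x) ⬝ᵥ (y - x)) ≤ y ⬝ᵥ A *ᵥ y := by
  have h := (isHermitian_iff_isSymm.1 hA.1).add_dotProduct_mulVec_add x (y - x)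
  rw [add_sub_cancel, dotProduct_comm (y - x)] at h
  have hnonneg := hA.dotProduct_mulVec_nonneg (y - x)
  rw [star_trivial] at hnonneg
  linarith

theorem IsSymm.dotProduct_mulVec_add_le_of_mulVec_eq_zero (hA : A.IsSymm) {μ : ℝ}
    {x xbar : ι → ℝ} (hxbar : A *ᵥ xbar = 0)
    (hstrong : μ * ((x - xbar) ⬝ᵥ (x - xbar)) ≤ (x - xbar) ⬝ᵥ A *ᵥ (x - xbar)) :
    x ⬝ᵥ A *ᵥ x + μ * ((x - xbar) ⬝ᵥ (x - xbar)) ≤ 2 * ((A *ᵥ x) ⬝ᵥ (x - xbar)) := by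
  have hAx : A *ᵥ (x - xbar) = A *ᵥ x := by rw [mulVec_sub, hxbar, sub_zero]
  have hq : x ⬝ᵥ A *ᵥ x = (x - xbar) ⬝ᵥ A *ᵥ (x - xbar) := by
    rw [hAx, sub_dotProduct, hA.dotProduct_mulVec_comm xbar, hxbar, dotProduct_zero, sub_zero]
  rw [hAx] at hstrong
  rw [hq, hAx, dotProduct_comm (A *ᵥ x)]
  linarith

end Matrix

namespace SimpleGraph

variable {V : Type*} [Fintype V] [DecidableEq V]

theorem dotProduct_lapMatrix_mulVec_le_of_le {H G : SimpleGraph V} [DecidableRel H.Adj]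
    [DecidableRel G.Adj] (hHG : H ≤ G) (v : V → ℝ) :
    v ⬝ᵥ H.lapMatrix ℝ *ᵥ v ≤ v ⬝ᵥ G.lapMatrix ℝ *ᵥ v := by
  simp only [← toLinearMap₂'_apply', lapMatrix_toLinearMap₂']
  gcongr with i _ j _
  split_ifs with hH hG
  · rfl
  · exact absurd (hHG hH) hG
  · positivity
  · rfl

section

variable (G : SimpleGraph V) [DecidableRel G.Adj] {R : Type*} [CommRing R]

theorem lapMatrix_mulVec_const (c : R) : G.lapMatrix R *ᵥ (fun _ ↦ c) = 0 := by
  rw [← mul_one c, ← smul_eq_mul, ← Pi.smul_def, mulVec_smul, lapMatrix_mulVec_const_eq_zero,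
    smul_zero]

theorem sum_lapMatrix_mulVec (v : V → R) : ∑ i, (G.lapMatrix R *ᵥ v) i = 0 := by
  have h := dotProduct_transpose_mulVec (G.lapMatrix R) v (fun _ ↦ 1)
  rw [(isSymm_lapMatrix R G).eq, lapMatrix_mulVec_const_eq_zero, dotProduct_zero] at h
  simpa [dotProduct] using h.symm

end

theorem lapMatrix_nesterov_step {H' H G S : SimpleGraph V} [DecidableRel H'.Adj]
    [DecidableRel H.Adj] [DecidableRel G.Adj] [DecidableRel S.Adj]
    (hH' : H' ≤ H) (hHG : H ≤ G) (hSH : S ≤ H) {μ s : ℝ} (hμ : 0 < μ) (hs : 1 < s)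
    (hmax : ∀ v : V → ℝ, v ⬝ᵥ G.lapMatrix ℝ *ᵥ v ≤ s ^ 2 * μ * (v ⬝ᵥ v))
    (hmin : ∀ v : V → ℝ, ∑ i, v i = 0 → μ * (v ⬝ᵥ v) ≤ v ⬝ᵥ S.lapMatrix ℝ *ᵥ v)
    {x y x' : V → ℝ} (hx' : x' = x - (s ^ 2 * μ)⁻¹ • H.lapMatrix ℝ *ᵥ x)
    {c : ℝ} (hc : ∑ i, (x i - c) = 0) :
    1 / 2 * (x' ⬝ᵥ H'.lapMatrix ℝ *ᵥ x') + μ / 2 *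
        ((s • x' - (s - 1) • y - fun _ ↦ c) ⬝ᵥ (s • x' - (s - 1) • y - fun _ ↦ c))
      ≤ (1 - s⁻¹) * (1 / 2 * (y ⬝ᵥ H.lapMatrix ℝ *ᵥ y) + μ / 2 *
        (((s + 1) • x - s • y - fun _ ↦ c) ⬝ᵥ ((s + 1) • x - s • y - fun _ ↦ c))) := by
  subst hx'
  have hL : 0 < s ^ 2 * μ := by positivity
  have hsymm := isSymm_lapMatrix ℝ H
  have hdescent := hsymm.dotProduct_mulVec_gradient_step_le hL x
    ((dotProduct_lapMatrix_mulVec_le_of_le hHG _).trans (hmax _))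
  have hnext := dotProduct_lapMatrix_mulVec_le_of_le hH' (x - (s ^ 2 * μ)⁻¹ • H.lapMatrix ℝ *ᵥ x)
  have hconvex := (posSemidef_lapMatrix ℝ H).dotProduct_mulVec_tangent_le x y
  have hstrong := hsymm.dotProduct_mulVec_add_le_of_mulVec_eq_zero (lapMatrix_mulVec_const H c)
    ((hmin _ (by simpa using hc)).trans (dotProduct_lapMatrix_mulVec_le_of_le hSH _))
  exact nesterov_potential_step_s3 (fx := 1 / 2 * (x ⬝ᵥ H.lapMatrix ℝ *ᵥ x)) hμ.le hs
    (inv_mul_cancel₀ hL.ne') (by linarith) (by linarith) (by linarith)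

end SimpleGraph

theorem accelerated_gossip_potential_nonincreasing_general
    (n : ℕ) (hn : 0 < n)
    (G : ℕ → SimpleGraph (Fin n)) [instG : ∀ k, DecidableRel (G k).Adj]
    (skel : SimpleGraph (Fin n)) [instS : DecidableRel skel.Adj]
    (hskel : ∀ k, skel ≤ G k)
    (lammax lammin : ℝ) (hlammin : 0 < lammin)
    (hmax : ∀ k (v : Fin n → ℝ), v ⬝ᵥ ((G k).lapMatrix ℝ *ᵥ v) ≤ lammax * (v ⬝ᵥ v))
    (hmin : ∀ v : Fin n → ℝ, (∑ i, v i) = 0 →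
      lammin * (v ⬝ᵥ v) ≤ v ⬝ᵥ (skel.lapMatrix ℝ *ᵥ v))
    (χ : ℝ) (hχdef : χ = lammax / lammin) (hχ : 1 < χ)
    (hatG : ℕ → SimpleGraph (Fin n)) [instH : ∀ k, DecidableRel (hatG k).Adj]
    (hhatG : ∀ k u v, (hatG k).Adj u v ↔ ∀ j ≤ k, (G j).Adj u v)
    (W : ℕ → Matrix (Fin n) (Fin n) ℝ) (hW : ∀ k, W k = (hatG k).lapMatrix ℝ)
    (h : ℕ → (Fin n → ℝ) → ℝ) (hh : ∀ k v, h k v = 1 / 2 * (v ⬝ᵥ (W k *ᵥ v)))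
    (η β τ γ : ℝ)
    (hη : η = 1 / lammax) (hβ : β = (Real.sqrt χ - 1) / (Real.sqrt χ + 1))
    (hτ : τ = 1 / (Real.sqrt χ + 1)) (hγ : γ = 1 / (Real.sqrt χ - 1))
    (x0 : Fin n → ℝ) (x y : ℕ → Fin n → ℝ)
    (hx0 : x 0 = x0) (hy0 : y 0 = x0)
    (hyup : ∀ k, y (k + 1) = x k - η • (W k *ᵥ x k))
    (hxup : ∀ k, x (k + 1) = (1 + β) • y (k + 1) - β • y k)
    (xbar : Fin n → ℝ) (hxbar : ∀ i, xbar i = (∑ j, x0 j) / n)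
    (z : ℕ → Fin n → ℝ)
    (hz : ∀ k, z k = (1 / τ) • x k - ((1 - τ) / τ) • y k)
    (Ψ : ℕ → ℝ)
    (hΨ : ∀ k, Ψ k =
      (1 + γ) ^ k * (h k (y k) + lammin / 2 * ((z k - xbar) ⬝ᵥ (z k - xbar)))) :
    ∀ k : ℕ, Ψ (k + 1) - Ψ k ≤ 0 := by
  intro k
  have hs : 1 < √χ := Real.lt_sqrt_of_sq_lt (by simpa using hχ)
  have hlammax : lammax = √χ ^ 2 * lammin := by
    rw [Real.sq_sqrt (by linarith), hχdef, div_mul_cancel₀ _ hlammin.ne']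
  have hz_eq : ∀ k, z k = (√χ + 1) • x k - √χ • y k := fun k ↦ by
    rw [hz, hτ]
    congr 2 <;> field_simp
    ring
  have hz_succ : z (k + 1) = √χ • y (k + 1) - (√χ - 1) • y k := by
    have hβ' : (√χ + 1) * β = √χ - 1 := by rw [hβ]; field_simp
    rw [hz_eq, hxup]
    linear_combination (norm := module) hβ' • (y (k + 1) - y k)
  have hsum : ∑ i, (x k i - (∑ j, x0 j) / n) = 0 := by
    have hsum_x := (sum_nesterov_iterate_eq (fun k ↦ hW k ▸ SimpleGraph.sum_lapMatrix_mulVec _)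
      (hy0.trans hx0.symm) hyup hxup k).1
    rw [Finset.sum_sub_distrib, hsum_x, hx0, Finset.sum_const, Finset.card_univ, Fintype.card_fin,
      nsmul_eq_mul, mul_div_cancel₀ _ (by positivity), sub_self]
  have hatG_succ_le : hatG (k + 1) ≤ hatG k := fun u v huv ↦
    (hhatG k u v).2 fun j hj ↦ (hhatG (k + 1) u v).1 huv j (hj.trans k.le_succ)
  have hatG_le : hatG k ≤ G k := fun u v huv ↦ (hhatG k u v).1 huv k le_rfl
  have skel_le : skel ≤ hatG k := fun u v huv ↦ (hhatG k u v).2 fun j _ ↦ hskel j huv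
  have hstep := SimpleGraph.lapMatrix_nesterov_step (y := y k) hatG_succ_le hatG_le skel_le
    hlammin hs (fun v ↦ hlammax ▸ hmax k v) hmin
    ((hyup k).trans (by rw [hW, hη, one_div, hlammax])) hsum
  obtain rfl : xbar = fun _ ↦ (∑ j, x0 j) / n := funext hxbar
  have hγ0 : 0 < 1 + γ := by rw [hγ, one_div]; linarith [inv_pos.2 (sub_pos.2 hs)]
  have hγ' : (1 + γ) * (1 - (√χ)⁻¹) = 1 := by
    rw [hγ]; field_simp [(sub_pos.2 hs).ne']; ring
  rw [hΨ, hΨ, hh, hh, hW, hW, hz_succ, hz_eq, sub_nonpos]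
  exact pow_succ_mul_le_pow_mul hγ0.le hγ' hstep k

/-- Along the accelerated gossip iteration over a time-varying graph
sequence with a connected skeleton and spectral bounds `λ_max(L(G_k)) ≤ λmax`,
`λmin ≤ λ_min⁺(L(Ĝ))` (encoded by the corresponding quadratic-form inequalities, the
kernel of `L(Ĝ)` being the constants since `Ĝ` is connected), the potential
`Ψ_k = (1+γ)^k·(h_k(y^k) + (λmin/2)·‖z^k − x̄‖²)` is non-increasing, where
`χ = λmax/λmin`, `τ = 1/(√χ+1)`, `γ = 1/(√χ−1)` and `z^k = (1/τ)x^k − ((1−τ)/τ)y^k`. -/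
theorem accelerated_gossip_potential_nonincreasing
    (n : ℕ) (hn : 0 < n)
    (G : ℕ → SimpleGraph (Fin n)) [instG : ∀ k, DecidableRel (G k).Adj]
    (skel : SimpleGraph (Fin n)) [instS : DecidableRel skel.Adj]
    (hconn : skel.Connected) (hskel : ∀ k, skel ≤ G k)
    (lammax lammin : ℝ) (hlammin : 0 < lammin)
    (hmax : ∀ k (v : Fin n → ℝ), v ⬝ᵥ ((G k).lapMatrix ℝ *ᵥ v) ≤ lammax * (v ⬝ᵥ v))
    (hmin : ∀ v : Fin n → ℝ, (∑ i, v i) = 0 →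
      lammin * (v ⬝ᵥ v) ≤ v ⬝ᵥ (skel.lapMatrix ℝ *ᵥ v))
    (χ : ℝ) (hχdef : χ = lammax / lammin) (hχ : 1 < χ)
    (hatG : ℕ → SimpleGraph (Fin n)) [instH : ∀ k, DecidableRel (hatG k).Adj]
    (hhatG : ∀ k u v, (hatG k).Adj u v ↔ ∀ j ≤ k, (G j).Adj u v)
    (W : ℕ → Matrix (Fin n) (Fin n) ℝ) (hW : ∀ k, W k = (hatG k).lapMatrix ℝ)
    (h : ℕ → (Fin n → ℝ) → ℝ) (hh : ∀ k v, h k v = 1 / 2 * (v ⬝ᵥ (W k *ᵥ v)))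
    (η β τ γ : ℝ)
    (hη : η = 1 / lammax) (hβ : β = (Real.sqrt χ - 1) / (Real.sqrt χ + 1))
    (hτ : τ = 1 / (Real.sqrt χ + 1)) (hγ : γ = 1 / (Real.sqrt χ - 1))
    (x0 : Fin n → ℝ) (x y : ℕ → Fin n → ℝ)
    (hx0 : x 0 = x0) (hy0 : y 0 = x0)
    (hyup : ∀ k, y (k + 1) = x k - η • (W k *ᵥ x k))
    (hxup : ∀ k, x (k + 1) = (1 + β) • y (k + 1) - β • y k)
    (xbar : Fin n → ℝ) (hxbar : ∀ i, xbar i = (∑ j, x0 j) / n)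
    (z : ℕ → Fin n → ℝ)
    (hz : ∀ k, z k = (1 / τ) • x k - ((1 - τ) / τ) • y k)
    (Ψ : ℕ → ℝ)
    (hΨ : ∀ k, Ψ k =
      (1 + γ) ^ k * (h k (y k) + lammin / 2 * ((z k - xbar) ⬝ᵥ (z k - xbar)))) :
    ∀ k : ℕ, Ψ (k + 1) - Ψ k ≤ 0 :=
  accelerated_gossip_potential_nonincreasing_general n hn G (instG := instG) skel (instS := instS)
    hskel lammax lammin hlammin hmax hmin χ hχdef hχ hatG (instH := instH) hhatG W hW h hh η β τ γ
    hη hβ hτ hγ x0 x y hx0 hy0 hyup hxup xbar hxbar z hz Ψ hΨ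
end

section
/- There exists d₁ ∈ ℕ such that for all integers d ≥ d₁ and k ≥ 2, the condition number of the Bethe tree satisfies n/2 ≤ χ(B_{d,k}) ≤ 2n, where n = (d^k − 1)/(d − 1) is the number of vertices of B_{d,k}. -/
open Matrix

attribute [local instance] Classical.propDecidable

/-- `G` is (isomorphic to) the Bethe tree `B_{d,k}`: a rooted tree of depth `k` in which
the root has degree `d`, the vertices at levels `2` through `k−1` (i.e. at distance
`1 ≤ j ≤ k−2` from the root) have degree `d+1`, and the vertices at level `k` (distance
`k−1` from the root) are leaves. -/
def IsBetheTree (d k : ℕ) {V : Type*} [Fintype V] (G : SimpleGraph V) : Prop :=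
  G.IsTree ∧ ∃ r : V,
    (∀ v : V, G.dist r v ≤ k - 1) ∧
    G.degree r = d ∧
    (∀ v : V, 0 < G.dist r v → G.dist r v < k - 1 → G.degree v = d + 1) ∧
    (∀ v : V, G.dist r v = k - 1 → G.degree v = 1)

/-- `lam` is the largest eigenvalue of the symmetric positive semidefinite matrix `M`,
characterized through the Rayleigh quotient. -/
def IsMaxEigenvalue {V : Type*} [Fintype V] (M : Matrix V V ℝ) (lam : ℝ) : Prop :=
  (∀ v : V → ℝ, v ⬝ᵥ (M *ᵥ v) ≤ lam * (v ⬝ᵥ v)) ∧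
  ∃ v : V → ℝ, v ⬝ᵥ v = 1 ∧ v ⬝ᵥ (M *ᵥ v) = lam

/-- `lam` is the smallest nonzero eigenvalue of the Laplacian matrix `M` of a connected
graph (whose kernel consists of the constant vectors), characterized through the Rayleigh
quotient on the orthogonal complement `{v : ∑ᵢ vᵢ = 0}` of the kernel. -/
def IsMinPosEigenvalue {V : Type*} [Fintype V] (M : Matrix V V ℝ) (lam : ℝ) : Prop :=
  (∀ v : V → ℝ, (∑ i, v i) = 0 → lam * (v ⬝ᵥ v) ≤ v ⬝ᵥ (M *ᵥ v)) ∧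
  ∃ v : V → ℝ, (∑ i, v i) = 0 ∧ v ⬝ᵥ v = 1 ∧ v ⬝ᵥ (M *ᵥ v) = lam

/-!
Root the tree at `r` and put `m = 1 + d + ⋯ + d^(k-2)`, so that `n = m d + 1`. The test vector
`e_r` gives `λ_max ≥ d`, and `(a - b)² ≤ 4a² + (4/3)b²` on every edge, each vertex being the
parent of at most `d` others, gives `λ_max ≤ 4 + 4d/3`. The branch below a child of the root has
`m` vertices and a single edge to the rest of the tree, so the vector constant on both sides of
that edge gives `λ_min⁺ ≤ n / (m (n - m))`. Conversely, a Cauchy–Schwarz inequality along the path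
from each vertex to the root, the edge at depth `j` weighted by `d^(j-1)`, gives the Poincaré
inequality `‖v‖² ≤ d/(d-1) · m · vᵀLv` for `v ⊥ 1`, i.e. `λ_min⁺ ≥ (d-1)/(d m)`. For `d ≥ 9`
these four bounds give `n/2 ≤ χ ≤ 2n`.
-/

open Finset

lemma sub_sq_le {a b s : ℝ} (hs : 0 < s) : (a - b) ^ 2 ≤ (1 + s) * a ^ 2 + (1 + s⁻¹) * b ^ 2 := by
  have h : 0 ≤ (s * a + b) ^ 2 / s := by positivity
  have : (1 + s) * a ^ 2 + (1 + s⁻¹) * b ^ 2 - (a - b) ^ 2 = (s * a + b) ^ 2 / s := by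
    field_simp
    ring
  linarith

lemma add_sq_le_of_sq_le {a b α β X : ℝ} (hα : 0 < α) (hβ : 0 ≤ β) (hX : 0 ≤ X)
    (hb : b ^ 2 ≤ β * X) : (a + b) ^ 2 ≤ (α + β) * (a ^ 2 / α + X) := by
  rcases hβ.eq_or_lt with rfl | hβ
  · obtain rfl : b = 0 := by nlinarith [sq_nonneg b]
    rw [add_zero, add_zero, mul_add, mul_div_cancel₀ _ hα.ne']
    nlinarith
  · calc (a + b) ^ 2 = (a - -b) ^ 2 := by ring
      _ ≤ (1 + β / α) * a ^ 2 + (1 + (β / α)⁻¹) * (-b) ^ 2 := sub_sq_le (by positivity)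
      _ ≤ (1 + β / α) * a ^ 2 + (1 + α / β) * (β * X) := by rw [inv_div, neg_sq]; gcongr
      _ = (α + β) * (a ^ 2 / α + X) := by field_simp; ring

lemma sum_sq_le_sum_sq_sub_of_sum_eq_zero {ι : Type*} [Fintype ι] {v : ι → ℝ}
    (hv : ∑ i, v i = 0) (a : ℝ) : ∑ i, v i ^ 2 ≤ ∑ i, (v i - a) ^ 2 := by
  have : ∑ i, (v i - a) ^ 2 = ∑ i, v i ^ 2 + Fintype.card ι * a ^ 2 := by
    simp only [sub_sq, sum_add_distrib, sum_sub_distrib, ← sum_mul, ← mul_sum, hv, sum_const,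
      card_univ, nsmul_eq_mul]
    ring
  rw [this]
  exact le_add_of_nonneg_right (by positivity)

lemma sum_ite_mem_univ {ι : Type*} [Fintype ι] (S : Finset ι) (a b : ℝ) :
    ∑ i, (if i ∈ S then a else b) = #S * a + #Sᶜ * b := by
  rw [← sum_add_sum_compl S, sum_congr rfl fun i hi => if_pos hi,
    sum_congr rfl fun i hi => if_neg (mem_compl.1 hi)]
  simp

lemma sum_filter_le_succ {ι : Type*} (s : Finset ι) (f : ι → ℕ) (g : ι → ℝ) (n : ℕ) :
    ∑ i ∈ s.filter (f · ≤ n + 1), g i =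
      ∑ i ∈ s.filter (f · ≤ n), g i + ∑ i ∈ s.filter (f · = n + 1), g i := by
  rw [← sum_union (disjoint_filter.2 fun i _ h1 h2 => by omega), ← filter_or]
  exact sum_congr (filter_congr fun i _ => by omega) fun _ _ => rfl

section Eigenvalues

variable {V : Type*} [Fintype V] {M : Matrix V V ℝ} {lam : ℝ}

lemma IsMaxEigenvalue.le_of_forall (h : IsMaxEigenvalue M lam) {c : ℝ}
    (hc : ∀ v : V → ℝ, v ⬝ᵥ (M *ᵥ v) ≤ c * (v ⬝ᵥ v)) : lam ≤ c := by
  obtain ⟨v, hv, hMv⟩ := h.2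
  simpa [hv, hMv] using hc v

lemma IsMaxEigenvalue.diag_le (h : IsMaxEigenvalue M lam) (i : V) : M i i ≤ lam := by
  simpa using h.1 (Pi.single i 1)

lemma IsMinPosEigenvalue.one_le_mul (h : IsMinPosEigenvalue M lam) {C : ℝ}
    (hC : ∀ v : V → ℝ, ∑ i, v i = 0 → v ⬝ᵥ v ≤ C * (v ⬝ᵥ (M *ᵥ v))) : 1 ≤ C * lam := by
  obtain ⟨v, hv0, hv, hMv⟩ := h.2
  simpa [hv, hMv] using hC v hv0

end Eigenvalues

namespace SimpleGraph

variable {V : Type*} {G : SimpleGraph V} {r i p q u c x : V} {d K : ℕ}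

lemma Connected.exists_adj_dist_add_one_eq (hG : G.Connected) (hi : i ≠ r) :
    ∃ p, G.Adj p i ∧ G.dist r p + 1 = G.dist r i := by
  obtain ⟨P, hP⟩ := hG.exists_walk_length_eq_dist r i
  obtain ⟨p, hpi, Q, hQ⟩ := Walk.exists_eq_cons_of_ne hi P.reverse
  have hlen : Q.length + 1 = G.dist r i := by
    simpa [hP] using (congr_arg Walk.length hQ).symm
  have hQp : G.dist r p ≤ Q.length := by
    simpa [dist_comm] using dist_le Q.reverse
  have hip : G.dist r i ≤ G.dist r p + 1 := by
    simpa [dist_eq_one_iff_adj.2 hpi.symm] using hG.dist_triangle (u := r) (v := p) (w := i)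
  exact ⟨p, hpi.symm, by omega⟩

lemma IsTree.eq_of_adj_of_dist_add_one_eq (hT : G.IsTree)
    (hp : G.Adj p i) (hpd : G.dist r p + 1 = G.dist r i)
    (hq : G.Adj q i) (hqd : G.dist r q + 1 = G.dist r i) : p = q := by
  obtain ⟨P, hP⟩ := hT.connected.exists_walk_length_eq_dist r p
  obtain ⟨Q, hQ⟩ := hT.connected.exists_walk_length_eq_dist r q
  have hPi : (P.concat hp).IsPath := (P.concat hp).isPath_of_length_eq_dist (by simp [hP, hpd])
  have hQi : (Q.concat hq).IsPath := (Q.concat hq).isPath_of_length_eq_dist (by simp [hQ, hqd])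
  exact (Walk.concat_inj ((hT.existsUnique_path r i).unique hPi hQi)).1

/-- The neighbour of `i` on a shortest path to `r`, with the junk value `r` when there is none
(at the root, or off the component of `r`). -/
noncomputable def parent (G : SimpleGraph V) (r i : V) : V :=
  if h : ∃ p, G.Adj p i ∧ G.dist r p + 1 = G.dist r i then h.choose else r

@[simp]
lemma parent_root : G.parent r r = r := by
  simp [parent]

lemma Connected.adj_parent (hG : G.Connected) (hi : i ≠ r) :
    G.Adj (G.parent r i) i ∧ G.dist r (G.parent r i) + 1 = G.dist r i := by
  rw [parent, dif_pos (hG.exists_adj_dist_add_one_eq hi)]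
  exact (hG.exists_adj_dist_add_one_eq hi).choose_spec

lemma IsTree.parent_eq (hT : G.IsTree) (hp : G.Adj p i) (hpd : G.dist r p + 1 = G.dist r i) :
    G.parent r i = p := by
  have hi : i ≠ r := by rintro rfl; simp at hpd
  obtain ⟨hadj, hd⟩ := hT.connected.adj_parent hi
  exact hT.eq_of_adj_of_dist_add_one_eq hadj hd hp hpd

variable (G r) in
/-- `pathEnergy d v l i` is the energy of `v` on the last `l` edges of the path from `i` towards
the root, the edge at depth `j` weighted by `d ^ (j - 1)`. -/
noncomputable def pathEnergy (d : ℕ) (v : V → ℝ) : ℕ → V → ℝ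
  | 0, _ => 0
  | l + 1, i => pathEnergy d v l (G.parent r i) + d ^ l * (v i - v (G.parent r i)) ^ 2

lemma pathEnergy_nonneg (v : V → ℝ) : ∀ l i, 0 ≤ G.pathEnergy r d v l i
  | 0, _ => le_rfl
  | l + 1, i => add_nonneg (pathEnergy_nonneg v l _) (by positivity)

lemma IsTree.sq_sub_root_le (hT : G.IsTree) (hd : 0 < d) (v : V → ℝ) :
    ∀ l i, G.dist r i = l →
      (v i - v r) ^ 2 ≤ (∑ t ∈ range l, ((d : ℝ)⁻¹) ^ t) * G.pathEnergy r d v l i := by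
  intro l
  induction l with
  | zero =>
    intro i hi
    obtain rfl : r = i := hT.connected.dist_eq_zero_iff.1 hi
    simp
  | succ l ih =>
    intro i hi
    have hir : i ≠ r := by rintro rfl; simp at hi
    have hpd := (hT.connected.adj_parent hir).2
    have key := add_sq_le_of_sq_le (a := v i - v (G.parent r i)) (pow_pos (inv_pos.2
      (Nat.cast_pos.2 hd)) l) (sum_nonneg fun t _ => by positivity) (pathEnergy_nonneg v l _)
      (ih (G.parent r i) (by omega))
    rw [sum_range_succ, pathEnergy]
    convert key using 1
    · ring
    · rw [div_eq_mul_inv, inv_pow, inv_inv]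
      ring

variable [Fintype V]

variable (G) in
noncomputable def children (r u : V) : Finset V :=
  univ.filter fun c => G.Adj u c ∧ G.dist r c = G.dist r u + 1

lemma mem_children : c ∈ G.children r u ↔ G.Adj u c ∧ G.dist r c = G.dist r u + 1 := by
  simp [children]

lemma IsTree.mem_children_iff (hT : G.IsTree) : c ∈ G.children r u ↔ c ≠ r ∧ G.parent r c = u := by
  rw [mem_children]
  constructor
  · rintro ⟨hadj, hd⟩
    exact ⟨by rintro rfl; simp at hd, hT.parent_eq hadj hd.symm⟩
  · rintro ⟨hc, rfl⟩
    obtain ⟨hadj, hd⟩ := hT.connected.adj_parent hc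
    exact ⟨hadj, hd.symm⟩

lemma IsTree.pairwiseDisjoint_children (hT : G.IsTree) (s : Set V) :
    s.PairwiseDisjoint (G.children r) := by
  intro u _ u' _ huu'
  rw [Function.onFun, Finset.disjoint_left]
  intro c hc hc'
  exact huu' ((hT.mem_children_iff.1 hc).2.symm.trans (hT.mem_children_iff.1 hc').2)

lemma neighborFinset_root : G.neighborFinset r = G.children r r := by
  ext c
  simp [mem_children, dist_eq_one_iff_adj]

lemma IsTree.neighborFinset_eq (hT : G.IsTree) (hu : u ≠ r) :
    G.neighborFinset u = insert (G.parent r u) (G.children r u) := by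
  ext c
  rw [mem_neighborFinset, mem_insert, mem_children]
  constructor
  · intro hadj
    rcases hT.dist_eq_dist_add_one_of_adj r hadj with h | h
    · exact Or.inl (hT.parent_eq hadj.symm h.symm).symm
    · exact Or.inr ⟨hadj, h⟩
  · rintro (rfl | ⟨hadj, -⟩)
    · exact (hT.connected.adj_parent hu).1.symm
    · exact hadj

lemma card_children_root : #(G.children r r) = G.degree r := by
  rw [← neighborFinset_root, card_neighborFinset_eq_degree]

lemma IsTree.card_children_add_one (hT : G.IsTree) (hu : u ≠ r) :
    #(G.children r u) + 1 = G.degree u := by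
  have hpu : G.parent r u ∉ G.children r u := by
    have := (hT.connected.adj_parent hu).2
    rw [mem_children]
    omega
  rw [← card_neighborFinset_eq_degree, hT.neighborFinset_eq hu, card_insert_of_notMem hpu]

lemma IsTree.sum_children {M : Type*} [AddCommMonoid M] (hT : G.IsTree) (f : V → V → M) :
    ∑ u, ∑ c ∈ G.children r u, f u c = ∑ c ∈ univ.erase r, f (G.parent r c) c := by
  rw [← sum_fiberwise (univ.erase r) (G.parent r)]
  refine sum_congr rfl fun u _ => ?_
  have hfib : (univ.erase r).filter (G.parent r · = u) = G.children r u := by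
    ext c
    simp [hT.mem_children_iff]
  rw [hfib]
  exact sum_congr rfl fun c hc => by rw [(hT.mem_children_iff.1 hc).2]

lemma IsTree.sum_comp_parent_le (hT : G.IsTree) (hcard : ∀ u, #(G.children r u) ≤ d)
    {w : V → ℝ} (hw : ∀ u, 0 ≤ w u) {S T : Finset V} (hS : r ∉ S)
    (hST : ∀ i ∈ S, G.parent r i ∈ T) :
    ∑ i ∈ S, w (G.parent r i) ≤ d * ∑ u ∈ T, w u := by
  rw [← sum_fiberwise_of_maps_to hST, mul_sum]
  refine sum_le_sum fun u _ => ?_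
  rw [sum_congr rfl fun i hi => by rw [(mem_filter.1 hi).2], sum_const, nsmul_eq_mul]
  have hsub : S.filter (G.parent r · = u) ⊆ G.children r u := fun i hi => by
    obtain ⟨hiS, rfl⟩ := mem_filter.1 hi
    exact hT.mem_children_iff.2 ⟨fun h => hS (h ▸ hiS), rfl⟩
  gcongr
  · exact hw u
  · exact_mod_cast (card_le_card hsub).trans (hcard u)

lemma lapMatrix_apply_self (i : V) : G.lapMatrix ℝ i i = G.degree i := by
  simp [lapMatrix, degMatrix]

lemma IsTree.quadForm_lapMatrix (hT : G.IsTree) (r : V) (v : V → ℝ) :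
    v ⬝ᵥ (G.lapMatrix ℝ *ᵥ v) = ∑ i ∈ univ.erase r, (v i - v (G.parent r i)) ^ 2 := by
  have hsplit : ∀ i j, (if G.Adj i j then (v i - v j) ^ 2 else 0) =
      (if j ∈ G.children r i then (v j - v i) ^ 2 else 0) +
        (if i ∈ G.children r j then (v i - v j) ^ 2 else 0) := by
    intro i j
    have hdist : ∀ {a b : V}, b ∈ G.children r a → G.dist r b = G.dist r a + 1 :=
      fun h => (mem_children.1 h).2
    by_cases hij : G.Adj i j
    · rcases hT.dist_eq_dist_add_one_of_adj r hij with h | h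
      · rw [if_pos hij, if_neg fun h' => by have := hdist h'; omega,
          if_pos (mem_children.2 ⟨hij.symm, h⟩), zero_add]
      · rw [if_pos hij, if_pos (mem_children.2 ⟨hij, h⟩),
          if_neg fun h' => by have := hdist h'; omega, add_zero]
        ring
    · rw [if_neg hij, if_neg fun h => hij (mem_children.1 h).1,
        if_neg fun h => hij (mem_children.1 h).1.symm, add_zero]
  rw [← toLinearMap₂'_apply', lapMatrix_toLinearMap₂']
  simp only [hsplit, sum_add_distrib, sum_ite_mem, univ_inter]
  rw [sum_comm (f := fun i j => if i ∈ G.children r j then (v i - v j) ^ 2 else 0)]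
  simp only [sum_ite_mem, univ_inter, hT.sum_children fun u c => (v c - v u) ^ 2]
  ring

lemma IsTree.quadForm_lapMatrix_le (hT : G.IsTree) (hcard : ∀ u, #(G.children r u) ≤ d)
    {s : ℝ} (hs : 0 < s) (v : V → ℝ) :
    v ⬝ᵥ (G.lapMatrix ℝ *ᵥ v) ≤ ((1 + s) + (1 + s⁻¹) * d) * (v ⬝ᵥ v) := by
  have hvv : v ⬝ᵥ v = ∑ i, v i ^ 2 := by simp [dotProduct, sq]
  have hpar := hT.sum_comp_parent_le hcard (w := fun i => v i ^ 2) (fun _ => sq_nonneg _)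
    (notMem_erase r univ) (fun i _ => mem_univ (G.parent r i))
  have hsub : ∑ i ∈ univ.erase r, v i ^ 2 ≤ ∑ i, v i ^ 2 :=
    sum_le_univ_sum_of_nonneg fun _ => sq_nonneg _
  calc v ⬝ᵥ (G.lapMatrix ℝ *ᵥ v)
      ≤ ∑ i ∈ univ.erase r, ((1 + s) * v i ^ 2 + (1 + s⁻¹) * v (G.parent r i) ^ 2) := by
        rw [hT.quadForm_lapMatrix r]
        exact sum_le_sum fun i _ => sub_sq_le hs
    _ = (1 + s) * ∑ i ∈ univ.erase r, v i ^ 2 +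
          (1 + s⁻¹) * ∑ i ∈ univ.erase r, v (G.parent r i) ^ 2 := by
        rw [sum_add_distrib, mul_sum, mul_sum]
    _ ≤ (1 + s) * ∑ i, v i ^ 2 + (1 + s⁻¹) * (d * ∑ i, v i ^ 2) := by gcongr
    _ = ((1 + s) + (1 + s⁻¹) * d) * (v ⬝ᵥ v) := by rw [hvv]; ring

lemma quadForm_lapMatrix_ite_le (S : Finset V) {x y : V}
    (hcut : ∀ u v, u ∈ S → v ∉ S → G.Adj u v → u = x ∧ v = y) (a b : ℝ) :
    (fun i => if i ∈ S then a else b) ⬝ᵥ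
      (G.lapMatrix ℝ *ᵥ fun i => if i ∈ S then a else b) ≤ (a - b) ^ 2 := by
  set w : V → ℝ := fun i => if i ∈ S then a else b
  have h0 : ∀ P : Prop, [Decidable P] → 0 ≤ (if P then (a - b) ^ 2 else 0) := fun P _ => by
    split_ifs <;> positivity
  have hpt : ∀ i j, (if G.Adj i j then (w i - w j) ^ 2 else 0) ≤
      (if i = x ∧ j = y then (a - b) ^ 2 else 0) + (if i = y ∧ j = x then (a - b) ^ 2 else 0) := by
    intro i j
    by_cases hadj : G.Adj i j
    swap
    · rw [if_neg hadj]
      exact add_nonneg (h0 _) (h0 _)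
    rw [if_pos hadj]
    by_cases hi : i ∈ S <;> by_cases hj : j ∈ S
    · simpa [w, hi, hj] using add_nonneg (h0 _) (h0 _)
    · obtain ⟨rfl, rfl⟩ := hcut i j hi hj hadj
      rw [if_pos ⟨rfl, rfl⟩]
      simpa only [w, if_pos hi, if_neg hj] using le_add_of_nonneg_right (h0 _)
    · obtain ⟨rfl, rfl⟩ := hcut j i hj hi hadj.symm
      rw [if_pos (show i = i ∧ j = j from ⟨rfl, rfl⟩)]
      simpa only [w, if_neg hi, if_pos hj, ← neg_sub a b, neg_sq] using le_add_of_nonneg_left (h0 _)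
    · simpa [w, hi, hj] using add_nonneg (h0 _) (h0 _)
  have hone : ∀ u v : V, ∑ i, ∑ j, (if i = u ∧ j = v then (a - b) ^ 2 else 0) = (a - b) ^ 2 := by
    simp [ite_and]
  have := sum_le_sum fun i (_ : i ∈ univ) => sum_le_sum fun j (_ : j ∈ univ) => hpt i j
  simp only [sum_add_distrib, hone] at this
  rw [← toLinearMap₂'_apply', lapMatrix_toLinearMap₂']
  linarith

lemma mul_card_mul_card_compl_le {lam : ℝ}
    (hmin : ∀ v : V → ℝ, ∑ i, v i = 0 → lam * (v ⬝ᵥ v) ≤ v ⬝ᵥ (G.lapMatrix ℝ *ᵥ v))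
    (S : Finset V) {x y : V} (hcut : ∀ u v, u ∈ S → v ∉ S → G.Adj u v → u = x ∧ v = y) :
    lam * (#S * #Sᶜ) ≤ Fintype.card V := by
  have hn : (#S : ℝ) + #Sᶜ = Fintype.card V := by exact_mod_cast card_add_card_compl S
  have hQ := quadForm_lapMatrix_ite_le S hcut (#Sᶜ : ℝ) (-#S)
  set n : ℝ := (Fintype.card V : ℝ)
  set w : V → ℝ := fun i => if i ∈ S then (#Sᶜ : ℝ) else -#S
  have hsum : ∑ i, w i = 0 := by
    rw [sum_ite_mem_univ]
    ring
  have hww : w ⬝ᵥ w = #S * #Sᶜ * n := by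
    have : ∀ i, w i * w i = if i ∈ S then (#Sᶜ : ℝ) ^ 2 else (#S : ℝ) ^ 2 := fun i => by
      by_cases hi : i ∈ S <;> simp [w, hi, sq]
    simp only [dotProduct, this, sum_ite_mem_univ, ← hn]
    ring
  have key : lam * (#S * #Sᶜ) * n ≤ n * n := by
    have := (hmin w hsum).trans hQ
    rw [hww, sub_neg_eq_add, add_comm, hn] at this
    linarith
  rcases (Fintype.card V).eq_zero_or_pos with h | h
  · have : #S = 0 := Nat.eq_zero_of_le_zero (h ▸ card_le_univ S)
    simp [this, n, h]
  · exact le_of_mul_le_mul_right key (by positivity)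

variable (G) in
/-- The vertices whose geodesic to the root `r` passes through `x`. -/
noncomputable def descendants (r x : V) : Finset V :=
  univ.filter fun i => G.dist r i = G.dist r x + G.dist x i

lemma mem_descendants : i ∈ G.descendants r x ↔ G.dist r i = G.dist r x + G.dist x i := by
  simp [descendants]

@[simp]
lemma descendants_root : G.descendants r r = univ := by
  ext i
  simp [mem_descendants]

lemma IsTree.parent_mem_descendants (hT : G.IsTree) (hi : i ∈ G.descendants r x) (hix : i ≠ x) :
    G.parent r i ∈ G.descendants r x ∧ G.dist x (G.parent r i) + 1 = G.dist x i := by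
  rw [mem_descendants] at hi
  obtain ⟨q, hqi, hqd⟩ := hT.connected.exists_adj_dist_add_one_eq (r := x) hix
  have hrq : G.dist r q ≤ G.dist r x + G.dist x q := hT.connected.dist_triangle
  have hri : G.dist r i ≤ G.dist r q + 1 := by
    simpa [dist_eq_one_iff_adj.2 hqi] using hT.connected.dist_triangle (u := r) (v := q) (w := i)
  have hq : G.parent r i = q := hT.parent_eq hqi (by omega)
  rw [hq, mem_descendants]
  omega

lemma IsTree.mem_descendants_of_mem_children (hT : G.IsTree) (hu : u ∈ G.descendants r x)
    (hc : c ∈ G.children r u) :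
    c ∈ G.descendants r x ∧ G.dist x c = G.dist x u + 1 := by
  rw [mem_descendants] at hu ⊢
  obtain ⟨huc, hd⟩ := mem_children.1 hc
  have hxc : G.dist x c ≤ G.dist x u + 1 := by
    simpa [dist_eq_one_iff_adj.2 huc] using hT.connected.dist_triangle (u := x) (v := u) (w := c)
  have hrc : G.dist r c ≤ G.dist r x + G.dist x c := hT.connected.dist_triangle
  omega

lemma IsTree.eq_of_adj_of_mem_descendants (hT : G.IsTree) {v : V} (hu : u ∈ G.descendants r x)
    (hv : v ∉ G.descendants r x) (huv : G.Adj u v) : u = x ∧ v = G.parent r x := by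
  rcases hT.dist_eq_dist_add_one_of_adj r huv with h | h
  · have hvu : G.parent r u = v := hT.parent_eq huv.symm h.symm
    by_cases hux : u = x
    · exact ⟨hux, hux ▸ hvu.symm⟩
    · exact absurd (hvu ▸ (hT.parent_mem_descendants hu hux).1) hv
  · exact absurd (hT.mem_descendants_of_mem_children hu (mem_children.2 ⟨huv, h⟩)).1 hv

lemma IsTree.filter_descendants_dist_succ (hT : G.IsTree) (x : V) (t : ℕ) :
    (G.descendants r x).filter (G.dist x · = t + 1) =
      ((G.descendants r x).filter (G.dist x · = t)).biUnion (G.children r) := by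
  ext i
  simp only [mem_filter, mem_biUnion]
  constructor
  · rintro ⟨hi, hit⟩
    have hix : i ≠ x := by rintro rfl; simp at hit
    have hir : i ≠ r := by rintro rfl; rw [mem_descendants] at hi; simp at hi; omega
    obtain ⟨hpi, hpd⟩ := hT.parent_mem_descendants hi hix
    exact ⟨G.parent r i, ⟨hpi, by omega⟩, hT.mem_children_iff.2 ⟨hir, rfl⟩⟩
  · rintro ⟨u, ⟨hu, hut⟩, hc⟩
    obtain ⟨hi, hd⟩ := hT.mem_descendants_of_mem_children hu hc
    exact ⟨hi, by omega⟩

lemma IsTree.card_filter_descendants_dist (hT : G.IsTree)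
    (hfull : ∀ u, G.dist r u < K → #(G.children r u) = d) (x : V) :
    ∀ t, G.dist r x + t ≤ K → #((G.descendants r x).filter (G.dist x · = t)) = d ^ t := by
  intro t
  induction t with
  | zero =>
    intro _
    have : (G.descendants r x).filter (G.dist x · = 0) = {x} := by
      ext i
      rw [mem_filter, mem_descendants, mem_singleton, hT.connected.dist_eq_zero_iff]
      constructor
      · rintro ⟨-, rfl⟩
        rfl
      · rintro rfl
        simp
    rw [this, card_singleton, pow_zero]
  | succ t ih =>
    intro ht
    have hcard : ∀ u ∈ (G.descendants r x).filter (G.dist x · = t), #(G.children r u) = d := by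
      intro u hu
      obtain ⟨hu, hut⟩ := mem_filter.1 hu
      rw [mem_descendants] at hu
      exact hfull u (by omega)
    rw [hT.filter_descendants_dist_succ, card_biUnion (hT.pairwiseDisjoint_children _),
      sum_congr rfl hcard, sum_const, ih (by omega), smul_eq_mul, pow_succ]

lemma IsTree.card_descendants (hT : G.IsTree)
    (hfull : ∀ u, G.dist r u < K → #(G.children r u) = d) (hdist : ∀ v, G.dist r v ≤ K)
    (x : V) : #(G.descendants r x) = ∑ t ∈ range (K - G.dist r x + 1), d ^ t := by
  have hmaps : ∀ i ∈ G.descendants r x, G.dist x i ∈ range (K - G.dist r x + 1) := by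
    intro i hi
    have := hdist i
    rw [mem_descendants] at hi
    rw [mem_range]
    omega
  rw [card_eq_sum_card_fiberwise hmaps]
  refine sum_congr rfl fun t ht => ?_
  rw [mem_range] at ht
  have := hdist x
  exact hT.card_filter_descendants_dist hfull x t (by omega)

lemma IsTree.card_eq_geom_sum_mul_add_one (hT : G.IsTree)
    (hfull : ∀ u, G.dist r u < K → #(G.children r u) = d) (hdist : ∀ v, G.dist r v ≤ K) :
    Fintype.card V = (∑ t ∈ range K, d ^ t) * d + 1 := by
  rw [← card_univ, ← descendants_root, hT.card_descendants hfull hdist, dist_self, Nat.sub_zero,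
    geom_sum_succ, mul_comm]

lemma IsTree.card_descendants_of_adj (hT : G.IsTree)
    (hfull : ∀ u, G.dist r u < K → #(G.children r u) = d) (hdist : ∀ v, G.dist r v ≤ K)
    (hK : 1 ≤ K) (hx : G.Adj r x) : #(G.descendants r x) = ∑ t ∈ range K, d ^ t := by
  rw [hT.card_descendants hfull hdist, dist_eq_one_iff_adj.2 hx, Nat.sub_add_cancel hK]

lemma IsTree.sum_level_pathEnergy_le (hT : G.IsTree) (hcard : ∀ u, #(G.children r u) ≤ d)
    (v : V → ℝ) : ∀ l,
      ∑ i ∈ univ.filter (G.dist r · = l + 1), G.pathEnergy r d v (l + 1) i ≤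
        d ^ l * ∑ i ∈ univ.filter (G.dist r · ≤ l + 1), (v i - v (G.parent r i)) ^ 2 := by
  intro l
  induction l with
  | zero =>
    simp only [pathEnergy, zero_add, pow_zero, one_mul]
    exact sum_le_sum_of_subset_of_nonneg (fun i hi => by
      simp only [mem_filter, mem_univ, true_and] at hi ⊢; omega) fun _ _ _ => sq_nonneg _
  | succ l ih =>
    set E := fun i => (v i - v (G.parent r i)) ^ 2
    have hpar : ∑ i ∈ univ.filter (G.dist r · = l + 2), G.pathEnergy r d v (l + 1) (G.parent r i)
        ≤ d * ∑ u ∈ univ.filter (G.dist r · = l + 1), G.pathEnergy r d v (l + 1) u := by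
      refine hT.sum_comp_parent_le hcard (pathEnergy_nonneg v _) (by simp) fun i hi => ?_
      have hi : G.dist r i = l + 2 := (mem_filter.1 hi).2
      have hir : i ≠ r := by rintro rfl; simp at hi
      have := (hT.connected.adj_parent hir).2
      simp only [mem_filter, mem_univ, true_and]
      omega
    calc ∑ i ∈ univ.filter (G.dist r · = l + 2), G.pathEnergy r d v (l + 2) i
        = ∑ i ∈ univ.filter (G.dist r · = l + 2), G.pathEnergy r d v (l + 1) (G.parent r i) +
            d ^ (l + 1) * ∑ i ∈ univ.filter (G.dist r · = l + 2), E i := by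
          simp only [pathEnergy, sum_add_distrib, mul_sum, E]
      _ ≤ d * (d ^ l * ∑ i ∈ univ.filter (G.dist r · ≤ l + 1), E i) +
            d ^ (l + 1) * ∑ i ∈ univ.filter (G.dist r · = l + 2), E i := by
          gcongr
          exact hpar.trans (by gcongr)
      _ = d ^ (l + 1) * ∑ i ∈ univ.filter (G.dist r · ≤ l + 2), E i := by
          rw [sum_filter_le_succ univ (G.dist r) E (l + 1)]
          ring

lemma IsTree.sum_pathEnergy_le (hT : G.IsTree) (hcard : ∀ u, #(G.children r u) ≤ d)
    (hdist : ∀ i, G.dist r i ≤ K) (v : V → ℝ) :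
    ∑ i, G.pathEnergy r d v (G.dist r i) i ≤
      (∑ t ∈ range K, (d : ℝ) ^ t) * (v ⬝ᵥ (G.lapMatrix ℝ *ᵥ v)) := by
  have hE : ∑ i, (v i - v (G.parent r i)) ^ 2 = v ⬝ᵥ (G.lapMatrix ℝ *ᵥ v) := by
    rw [hT.quadForm_lapMatrix r, ← sum_erase_add _ _ (mem_univ r)]
    simp
  have hQ : ∀ l, ∑ i ∈ univ.filter (G.dist r · ≤ l), (v i - v (G.parent r i)) ^ 2 ≤
      v ⬝ᵥ (G.lapMatrix ℝ *ᵥ v) := fun l =>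
    (sum_le_univ_sum_of_nonneg fun _ => sq_nonneg _).trans hE.le
  have hmaps : ∀ i ∈ (univ : Finset V), G.dist r i ∈ range (K + 1) :=
    fun i _ => mem_range.2 (Nat.lt_succ_of_le (hdist i))
  calc ∑ i, G.pathEnergy r d v (G.dist r i) i
      = ∑ l ∈ range (K + 1), ∑ i ∈ univ.filter (G.dist r · = l), G.pathEnergy r d v l i := by
        rw [← sum_fiberwise_of_maps_to hmaps]
        exact sum_congr rfl fun l _ => sum_congr rfl fun i hi => by rw [(mem_filter.1 hi).2]
    _ = ∑ l ∈ range K, ∑ i ∈ univ.filter (G.dist r · = l + 1), G.pathEnergy r d v (l + 1) i := by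
        simp [sum_range_succ', pathEnergy]
    _ ≤ ∑ l ∈ range K, (d : ℝ) ^ l * (v ⬝ᵥ (G.lapMatrix ℝ *ᵥ v)) :=
        sum_le_sum fun l _ => (hT.sum_level_pathEnergy_le hcard v l).trans (by gcongr; exact hQ _)
    _ = (∑ t ∈ range K, (d : ℝ) ^ t) * (v ⬝ᵥ (G.lapMatrix ℝ *ᵥ v)) := by rw [sum_mul]

lemma IsTree.dotProduct_self_le_mul_quadForm (hT : G.IsTree) (hd : 1 < d)
    (hcard : ∀ u, #(G.children r u) ≤ d) (hdist : ∀ i, G.dist r i ≤ K) {v : V → ℝ}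
    (hv : ∑ i, v i = 0) :
    v ⬝ᵥ v ≤ (1 - (d : ℝ)⁻¹)⁻¹ * (∑ t ∈ range K, (d : ℝ) ^ t) * (v ⬝ᵥ (G.lapMatrix ℝ *ᵥ v)) := by
  have hρ : ∀ l, ∑ t ∈ range l, ((d : ℝ)⁻¹) ^ t ≤ (1 - (d : ℝ)⁻¹)⁻¹ := fun l => by
    have := geom_sum_Ico_le_of_lt_one (m := 0) (n := l) (inv_nonneg.2 (Nat.cast_nonneg d))
      (inv_lt_one_of_one_lt₀ (by exact_mod_cast hd : (1 : ℝ) < d))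
    rwa [← range_eq_Ico, pow_zero, one_div] at this
  have hρ0 : 0 ≤ (1 - (d : ℝ)⁻¹)⁻¹ := by simpa using hρ 0
  calc v ⬝ᵥ v = ∑ i, v i ^ 2 := by simp [dotProduct, sq]
    _ ≤ ∑ i, (v i - v r) ^ 2 := sum_sq_le_sum_sq_sub_of_sum_eq_zero hv _
    _ ≤ ∑ i, (1 - (d : ℝ)⁻¹)⁻¹ * G.pathEnergy r d v (G.dist r i) i :=
        sum_le_sum fun i _ => (hT.sq_sub_root_le (by omega) v _ i rfl).trans
          (mul_le_mul_of_nonneg_right (hρ _) (pathEnergy_nonneg v _ _))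
    _ ≤ (1 - (d : ℝ)⁻¹)⁻¹ * ((∑ t ∈ range K, (d : ℝ) ^ t) * (v ⬝ᵥ (G.lapMatrix ℝ *ᵥ v))) := by
        rw [← mul_sum]
        exact mul_le_mul_of_nonneg_left (hT.sum_pathEnergy_le hcard hdist v) hρ0
    _ = _ := by ring

end SimpleGraph

lemma IsBetheTree.exists_root {d k : ℕ} {V : Type*} [Fintype V] {G : SimpleGraph V}
    (hB : IsBetheTree d k G) :
    ∃ r, G.degree r = d ∧ (∀ v, G.dist r v ≤ k - 1) ∧ (∀ u, #(G.children r u) ≤ d) ∧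
      ∀ u, G.dist r u < k - 1 → #(G.children r u) = d := by
  obtain ⟨hT, r, hdist, hroot, hinner, hleaf⟩ := hB
  have hfull : ∀ u, G.dist r u < k - 1 → #(G.children r u) = d := by
    intro u hu
    by_cases hur : u = r
    · rw [hur, SimpleGraph.card_children_root, hroot]
    · have := hT.card_children_add_one hur
      have := hinner u (hT.connected.pos_dist_of_ne (Ne.symm hur)) hu
      omega
  refine ⟨r, hroot, hdist, fun u => ?_, hfull⟩
  by_cases hur : u = r
  · rw [hur, SimpleGraph.card_children_root, hroot]
  rcases (hdist u).lt_or_eq with h | h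
  · exact (hfull u h).le
  · have := hT.card_children_add_one hur
    have := hleaf u h
    omega

lemma ratio_bounds_of_eigenvalue_bounds {d m m' n lmax lmin : ℝ} (hd : 9 ≤ d) (hm : 1 ≤ m)
    (hn : n = m * d + 1) (hmm' : m + m' = n) (hmax_ge : d ≤ lmax)
    (hmax_le : lmax ≤ (1 + 3) + (1 + 3⁻¹) * d) (hmin_ge : 1 ≤ (1 - d⁻¹)⁻¹ * m * lmin)
    (hmin_le : lmin * (m * m') ≤ n) :
    n / 2 ≤ lmax / lmin ∧ lmax / lmin ≤ 2 * n := by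
  have hd1 : 0 < d - 1 := by linarith
  have hlow : d - 1 ≤ d * m * lmin := by
    have : (1 - d⁻¹)⁻¹ = d / (d - 1) := by field_simp
    rw [this, div_mul_eq_mul_div, div_mul_eq_mul_div, one_le_div hd1] at hmin_ge
    exact hmin_ge
  have hlmin : 0 < lmin := pos_of_mul_pos_right (by linarith) (by positivity : 0 ≤ d * m)
  have hm' : m' = m * (d - 1) + 1 := by linarith
  have hmm : 0 < m * m' := mul_pos (by linarith) (by rw [hm']; nlinarith)
  constructor
  · rw [le_div_iff₀ hlmin]
    have hP : n ^ 2 ≤ 2 * d * (m * m') := by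
      have h1 : 1 ≤ m ^ 2 := by nlinarith
      have h2 : 1 ≤ d * (d - 2) := by nlinarith
      rw [hm', hn]
      nlinarith [mul_le_mul h1 h2 zero_le_one (by positivity)]
    have : n / 2 * lmin * (m * m') ≤ d * (m * m') := by
      have := mul_le_mul_of_nonneg_left hmin_le (by rw [hn]; nlinarith : 0 ≤ n / 2)
      nlinarith
    exact (le_of_mul_le_mul_right this hmm).trans hmax_ge
  · rw [div_le_iff₀ hlmin]
    have : d * m * lmin ≤ n * lmin := mul_le_mul_of_nonneg_right (by rw [hn]; linarith) hlmin.le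
    linarith

/-- There exists `d₁ ∈ ℕ` such that for all `d ≥ d₁` and `k ≥ 2`, the
condition number `χ(B_{d,k}) = λ_max(L(B_{d,k}))/λ_min⁺(L(B_{d,k}))` of the Bethe tree
satisfies `n/2 ≤ χ(B_{d,k}) ≤ 2n`, where `n = (d^k − 1)/(d − 1)` is its number of
vertices. -/
theorem bethe_tree_condition_number :
    ∃ d₁ : ℕ, ∀ d k : ℕ, d₁ ≤ d → 2 ≤ k →
      ∀ (V : Type) [Fintype V] (G : SimpleGraph V), IsBetheTree d k G →
        ∀ lammax lammin : ℝ,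
          IsMaxEigenvalue (G.lapMatrix ℝ) lammax →
          IsMinPosEigenvalue (G.lapMatrix ℝ) lammin →
          (Fintype.card V : ℝ) / 2 ≤ lammax / lammin ∧
            lammax / lammin ≤ 2 * (Fintype.card V : ℝ) := by
  refine ⟨9, fun d k hd hk V _ G hB lammax lammin hmax hmin => ?_⟩
  have hT : G.IsTree := hB.1
  obtain ⟨r, hdeg, hdist, hle, hfull⟩ := hB.exists_root
  obtain ⟨x, hx⟩ := (G.degree_pos_iff_exists_adj r).1 (by omega)
  have hS := hT.card_descendants_of_adj hfull hdist (by omega) hx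
  have hm : 1 ≤ ∑ t ∈ range (k - 1), d ^ t := by
    simpa using single_le_sum (f := (d ^ ·)) (fun _ _ => Nat.zero_le _)
      (mem_range.2 (by omega : 0 < k - 1))
  have hmax_ge := hmax.diag_le r
  rw [SimpleGraph.lapMatrix_apply_self, hdeg] at hmax_ge
  have hmin_ge := hmin.one_le_mul fun v hv =>
    hT.dotProduct_self_le_mul_quadForm (by omega) hle hdist hv
  have hmin_le := SimpleGraph.mul_card_mul_card_compl_le hmin.1 (G.descendants r x)
    fun _ _ => hT.eq_of_adj_of_mem_descendants
  exact ratio_bounds_of_eigenvalue_bounds (m' := #(G.descendants r x)ᶜ) (by exact_mod_cast hd)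
    (by exact_mod_cast hm) (by exact_mod_cast hT.card_eq_geom_sum_mul_add_one hfull hdist)
    (by exact_mod_cast hS ▸ card_add_card_compl _) hmax_ge
    (hmax.le_of_forall (hT.quadForm_lapMatrix_le hle (by norm_num))) hmin_ge
    (by exact_mod_cast hS ▸ hmin_le)
end

section
/- For all integers d ≥ 1 and k ≥ 3, the condition number of the graph H_{d,k} satisfies χ(H_{d,k}) ≤ 6·d·(2d−1)·k^{d+1}. -/
open Matrix

attribute [local instance] Classical.propDecidable

/-- Vertex type of the graph `H_{d+1,k}` of the paper (the index is shifted by one: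
`HVertex 0 k` is the vertex set of `H_{1,k}`, a path on `k` vertices). -/
def HVertex : ℕ → ℕ → Type
  | 0, k => Fin k
  | d + 1, k => Fin k ⊕ (Fin k × HVertex d k)

instance HVertex.fintype : (d k : ℕ) → Fintype (HVertex d k)
  | 0, k => inferInstanceAs (Fintype (Fin k))
  | d + 1, k =>
    letI := HVertex.fintype d k
    inferInstanceAs (Fintype (Fin k ⊕ (Fin k × HVertex d k)))

/-- The designated root of `H_{d+1,k}`: an endpoint of the topmost path. -/
def HRoot (d k : ℕ) [NeZero k] : HVertex d k :=
  match d with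
  | 0 => (0 : Fin k)
  | _ + 1 => Sum.inl (0 : Fin k)

/-- Adjacency of `H_{d+1,k}`: `HVertex 0 k` carries the path graph on `k` vertices;
`H_{d+2,k}` is a path on `k` vertices together with, for each path vertex `i`, an edge
from `i` to the root of the `i`-th fresh copy of `H_{d+1,k}`. -/
def HAdj (k : ℕ) [NeZero k] : (d : ℕ) → HVertex d k → HVertex d k → Prop
  | 0 => fun u v => (SimpleGraph.pathGraph k).Adj u v
  | d + 1 => fun u v =>
      match u, v with
      | Sum.inl i, Sum.inl j => (SimpleGraph.pathGraph k).Adj i j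
      | Sum.inl i, Sum.inr p => i = p.1 ∧ p.2 = HRoot d k
      | Sum.inr p, Sum.inl i => p.1 = i ∧ p.2 = HRoot d k
      | Sum.inr p, Sum.inr q => p.1 = q.1 ∧ HAdj k d p.2 q.2

theorem HAdj.symm' (k : ℕ) [NeZero k] :
    ∀ (d : ℕ) (u v : HVertex d k), HAdj k d u v → HAdj k d v u := by
  intro d
  induction d with
  | zero => exact fun u v h => (SimpleGraph.pathGraph k).adj_symm h
  | succ d ih =>
    intro u v h
    match u, v with
    | Sum.inl i, Sum.inl j => exact (SimpleGraph.pathGraph k).adj_symm h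
    | Sum.inl i, Sum.inr p => exact ⟨h.1.symm, h.2⟩
    | Sum.inr p, Sum.inl i => exact ⟨h.1.symm, h.2⟩
    | Sum.inr p, Sum.inr q => exact ⟨h.1.symm, ih p.2 q.2 h.2⟩

theorem HAdj.irrefl' (k : ℕ) [NeZero k] :
    ∀ (d : ℕ) (u : HVertex d k), ¬HAdj k d u u := by
  intro d
  induction d with
  | zero => exact fun u h => (SimpleGraph.pathGraph k).irrefl h
  | succ d ih =>
    intro u h
    match u with
    | Sum.inl i => exact (SimpleGraph.pathGraph k).irrefl h
    | Sum.inr p => exact ih p.2 h.2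

/-- The graph `H_{d+1,k}` of the paper (index shifted by one: `HGraph k 0 = H_{1,k}`). -/
def HGraph (k : ℕ) [NeZero k] (d : ℕ) : SimpleGraph (HVertex d k) where
  Adj := HAdj k d
  symm := ⟨fun u v h => HAdj.symm' k d u v h⟩
  loopless := ⟨fun u h => HAdj.irrefl' k d u h⟩

/-! The largest Laplacian eigenvalue is at most twice the maximum degree, which is `3` for
`H_{d,k}`. For the smallest nonzero one, take a unit vector `v` with `∑ vᵢ = 0`: then
`∑_{a,b} (v a - v b)² = 2n`, while Cauchy–Schwarz along a shortest path bounds each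
`(v a - v b)²` by `diam · vᵀLv`, so `λ_min⁺ ≥ 2 / (n · diam)`. Every vertex of `H_{d,k}` lies
within `dk - 1` of the root, so `diam ≤ 2(dk - 1)`; finally `(k - 1) n = k^(d+1) - k` and
`dk - 1 ≤ (2d - 1)(k - 1)`. -/

open Finset

lemma sq_add_le_succ_mul {x y n S : ℝ} (hn : 0 ≤ n) (hS : 0 ≤ S) (hy : y ^ 2 ≤ n * S) :
    (x + y) ^ 2 ≤ (n + 1) * (x ^ 2 + S) := by
  have hxy : 2 * x * y ≤ n * x ^ 2 + S := by
    rcases hn.eq_or_lt with rfl | hn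
    · nlinarith [sq_nonneg y]
    · nlinarith [sq_nonneg (n * x - y)]
  nlinarith

namespace SimpleGraph

variable {V : Type*}

def edgeSqDiff (v : V → ℝ) : Sym2 V → ℝ :=
  Sym2.lift ⟨fun a b => (v a - v b) ^ 2, fun a b => by ring⟩

@[simp]
lemma edgeSqDiff_mk (v : V → ℝ) (a b : V) : edgeSqDiff v s(a, b) = (v a - v b) ^ 2 := rfl

lemma edgeSqDiff_nonneg (v : V → ℝ) (e : Sym2 V) : 0 ≤ edgeSqDiff v e := by
  induction e with
  | h a b => exact sq_nonneg _

variable {G : SimpleGraph V}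

lemma Walk.sum_edgeSqDiff_nonneg (v : V → ℝ) {a b : V} (p : G.Walk a b) :
    0 ≤ (p.edges.map (edgeSqDiff v)).sum :=
  List.sum_nonneg (by simpa using fun e _ => edgeSqDiff_nonneg v e)

lemma Walk.sq_sub_le_length_mul_sum_edgeSqDiff (v : V → ℝ) {a b : V} (p : G.Walk a b) :
    (v a - v b) ^ 2 ≤ p.length * (p.edges.map (edgeSqDiff v)).sum := by
  induction p with
  | nil => simp
  | @cons a c b h p ih =>
    simpa [sub_add_sub_cancel] using
      sq_add_le_succ_mul (x := v a - v c) (by positivity) (p.sum_edgeSqDiff_nonneg v) ih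

variable [Fintype V] [DecidableRel G.Adj]

lemma Walk.IsTrail.sum_edgeSqDiff_le (v : V → ℝ) {a b : V} {p : G.Walk a b} (hp : p.IsTrail) :
    (p.edges.map (edgeSqDiff v)).sum ≤ ∑ e ∈ G.edgeFinset, edgeSqDiff v e := by
  rw [← List.sum_toFinset _ hp.edges_nodup]
  refine sum_le_sum_of_subset_of_nonneg (fun e he => ?_) fun e _ _ => edgeSqDiff_nonneg v e
  exact mem_edgeFinset.2 (p.edges_subset_edgeSet (List.mem_toFinset.1 he))

variable (G)

lemma sum_darts_eq_two_mul_sum_edgeFinset [DecidableEq V] (f : Sym2 V → ℝ) :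
    ∑ d : G.Dart, f d.edge = 2 * ∑ e ∈ G.edgeFinset, f e := by
  rw [← sum_fiberwise_of_maps_to (t := G.edgeFinset) (g := Dart.edge)
    (fun d _ => mem_edgeFinset.2 d.edge_mem), mul_sum]
  refine sum_congr rfl fun e he => ?_
  rw [sum_congr rfl fun d hd => congrArg f (mem_filter.1 hd).2, sum_const,
    G.dart_edge_fiber_card e (mem_edgeFinset.1 he), two_smul, two_mul]

lemma sum_sum_adj_eq_sum_darts (g : V → V → ℝ) :
    ∑ i, ∑ j, (if G.Adj i j then g i j else 0) = ∑ d : G.Dart, g d.fst d.snd := by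
  rw [← Fintype.sum_prod_type', ← sum_filter]
  refine sum_bij' (fun p hp => ⟨p, (mem_filter.1 hp).2⟩) (fun d _ => d.toProd)
    ?_ ?_ ?_ ?_ ?_ <;> simp [Dart.adj]

lemma dotProduct_lapMatrix_mulVec_eq_sum_edgeFinset (v : V → ℝ) :
    v ⬝ᵥ (G.lapMatrix ℝ *ᵥ v) = ∑ e ∈ G.edgeFinset, edgeSqDiff v e := by
  classical
  rw [← toLinearMap₂'_apply', lapMatrix_toLinearMap₂', sum_sum_adj_eq_sum_darts]
  simp only [← edgeSqDiff_mk]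
  change (∑ d : G.Dart, edgeSqDiff v d.edge) / 2 = _
  rw [sum_darts_eq_two_mul_sum_edgeFinset]
  ring

lemma sq_sub_le_mul_dotProduct_lapMatrix_mulVec (v : V → ℝ) {a b : V} {D : ℕ}
    (hab : G.edist a b ≤ D) : (v a - v b) ^ 2 ≤ D * (v ⬝ᵥ (G.lapMatrix ℝ *ᵥ v)) := by
  classical
  obtain ⟨p, hp⟩ :=
    exists_walk_of_edist_ne_top (ne_top_of_le_ne_top (ENat.natCast_ne_top D) hab)
  have hlen : p.bypass.length ≤ D :=
    p.length_bypass_le_length.trans (ENat.natCast_le_natCast.1 (hp ▸ hab))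
  rw [dotProduct_lapMatrix_mulVec_eq_sum_edgeFinset]
  calc (v a - v b) ^ 2
      ≤ p.bypass.length * (p.bypass.edges.map (edgeSqDiff v)).sum :=
        p.bypass.sq_sub_le_length_mul_sum_edgeSqDiff v
    _ ≤ D * ∑ e ∈ G.edgeFinset, edgeSqDiff v e :=
        mul_le_mul (by exact_mod_cast hlen) (p.bypass_isPath.isTrail.sum_edgeSqDiff_le v)
          (p.bypass.sum_edgeSqDiff_nonneg v) (by positivity)

lemma sum_sum_sq_sub_eq (v : V → ℝ) :
    ∑ i, ∑ j, (v i - v j) ^ 2 = 2 * Fintype.card V * (v ⬝ᵥ v) - 2 * (∑ i, v i) ^ 2 := by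
  have hvv : v ⬝ᵥ v = ∑ i, v i ^ 2 := by simp only [dotProduct, sq]
  simp only [hvv, sub_sq, sum_add_distrib, sum_sub_distrib, sum_const, card_univ, nsmul_eq_mul,
    ← mul_sum, ← sum_mul]
  ring

lemma two_mul_dotProduct_self_le (v : V → ℝ) (hv : ∑ i, v i = 0) {D : ℕ} (hD : G.ediam ≤ D) :
    2 * (v ⬝ᵥ v) ≤ Fintype.card V * D * (v ⬝ᵥ (G.lapMatrix ℝ *ᵥ v)) := by
  have hpairs : ∑ i, ∑ j, (v i - v j) ^ 2 ≤ ∑ _i : V, ∑ _j : V, D * (v ⬝ᵥ (G.lapMatrix ℝ *ᵥ v)) :=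
    sum_le_sum fun i _ => sum_le_sum fun j _ =>
      G.sq_sub_le_mul_dotProduct_lapMatrix_mulVec v (edist_le_ediam.trans hD)
  rw [sum_sum_sq_sub_eq, hv] at hpairs
  simp only [sum_const, card_univ, nsmul_eq_mul] at hpairs
  rcases isEmpty_or_nonempty V with hV | hV
  · simp [dotProduct]
  · have hn : (0 : ℝ) < Fintype.card V := by exact_mod_cast Fintype.card_pos
    nlinarith

lemma dotProduct_lapMatrix_mulVec_le (v : V → ℝ) {Δ : ℕ} (hΔ : ∀ i, G.degree i ≤ Δ) :
    v ⬝ᵥ (G.lapMatrix ℝ *ᵥ v) ≤ 2 * Δ * (v ⬝ᵥ v) := by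
  have hdeg (i : V) : ∑ j, (if G.Adj i j then v i ^ 2 else 0) ≤ Δ * v i ^ 2 := by
    rw [← sum_filter, sum_const, ← neighborFinset_eq_filter, card_neighborFinset_eq_degree,
      nsmul_eq_mul]
    gcongr
    exact_mod_cast hΔ i
  have hsq (i j : V) : (v i - v j) ^ 2 ≤ 2 * v i ^ 2 + 2 * v j ^ 2 := by
    nlinarith [sq_nonneg (v i + v j)]
  calc v ⬝ᵥ (G.lapMatrix ℝ *ᵥ v)
      = (∑ i, ∑ j, if G.Adj i j then (v i - v j) ^ 2 else 0) / 2 := by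
        rw [← toLinearMap₂'_apply', lapMatrix_toLinearMap₂']
    _ ≤ (∑ i, ∑ j, ((if G.Adj i j then 2 * v i ^ 2 else 0) +
          (if G.Adj j i then 2 * v j ^ 2 else 0))) / 2 := by
        gcongr with i _ j _
        simp only [G.adj_comm j i]
        split_ifs <;> simp [hsq]
    _ = 2 * ∑ i, ∑ j, if G.Adj i j then v i ^ 2 else 0 := by
        simp only [sum_add_distrib]
        rw [sum_comm (f := fun i j => if G.Adj j i then 2 * v j ^ 2 else 0)]
        simp only [mul_sum, mul_ite, mul_zero]
        ring
    _ ≤ 2 * ∑ i, Δ * v i ^ 2 := by gcongr with i; exact hdeg i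
    _ = 2 * Δ * (v ⬝ᵥ v) := by simp only [dotProduct, ← mul_sum, sq]; ring

end SimpleGraph

open SimpleGraph

section Eigenvalues

variable {V : Type*} [Fintype V] {G : SimpleGraph V} [DecidableRel G.Adj]

lemma IsMaxEigenvalue.le_two_mul_of_forall_degree_le {lam : ℝ}
    (h : IsMaxEigenvalue (G.lapMatrix ℝ) lam) {Δ : ℕ} (hΔ : ∀ i, G.degree i ≤ Δ) :
    lam ≤ 2 * Δ := by
  obtain ⟨v, hv1, rfl⟩ := h.2
  simpa [hv1] using G.dotProduct_lapMatrix_mulVec_le v hΔ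

lemma IsMinPosEigenvalue.two_div_le_of_ediam_le {lam : ℝ}
    (h : IsMinPosEigenvalue (G.lapMatrix ℝ) lam) {D : ℕ} (hD : G.ediam ≤ D) :
    2 / (Fintype.card V * D) ≤ lam := by
  obtain ⟨v, hv0, hv1, rfl⟩ := h.2
  have := G.two_mul_dotProduct_self_le v hv0 hD
  rw [hv1] at this
  rcases (by positivity : (0 : ℝ) ≤ Fintype.card V * D).eq_or_lt with h0 | h0
  · rw [← h0, div_zero]
    exact (posSemidef_lapMatrix ℝ G).dotProduct_mulVec_nonneg v
  · rw [div_le_iff₀ h0]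
    linarith

lemma lapMatrix_eigenvalue_ratio_le [Nonempty V] {lammax lammin : ℝ}
    (hmax : IsMaxEigenvalue (G.lapMatrix ℝ) lammax)
    (hmin : IsMinPosEigenvalue (G.lapMatrix ℝ) lammin) {Δ D : ℕ} (hΔ : ∀ i, G.degree i ≤ Δ)
    (hD : G.ediam ≤ D) (hD0 : 0 < D) :
    lammax / lammin ≤ Δ * Fintype.card V * D := by
  have hnD : (0 : ℝ) < Fintype.card V * D := by
    have := Fintype.card_pos (α := V)
    positivity
  calc lammax / lammin ≤ (2 * Δ) / (2 / (Fintype.card V * D)) :=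
        div_le_div₀ (by positivity) (hmax.le_two_mul_of_forall_degree_le hΔ) (by positivity)
          (hmin.two_div_le_of_ediam_le hD)
    _ = Δ * Fintype.card V * D := by field_simp

end Eigenvalues

namespace SimpleGraph

lemma Hom.edist_le {V W : Type*} {G : SimpleGraph V} {G' : SimpleGraph W} (f : G →g G')
    (a b : V) : G'.edist (f a) (f b) ≤ G.edist a b := by
  by_cases h : G.edist a b = ⊤
  · exact h ▸ le_top
  · obtain ⟨p, hp⟩ := exists_walk_of_edist_ne_top h
    simpa [hp] using (p.map f).edist_le

lemma pathGraph_edist_zero_le {k : ℕ} [NeZero k] (i : Fin k) :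
    (pathGraph k).edist i 0 ≤ i.val := by
  obtain ⟨n, hn⟩ := i
  induction n with
  | zero => simp
  | succ n ih =>
    have hadj : (pathGraph k).Adj ⟨n + 1, hn⟩ ⟨n, by omega⟩ := pathGraph_adj.2 (Or.inr rfl)
    calc (pathGraph k).edist ⟨n + 1, hn⟩ 0
        ≤ (pathGraph k).edist ⟨n + 1, hn⟩ ⟨n, by omega⟩ + (pathGraph k).edist ⟨n, by omega⟩ 0 :=
          SimpleGraph.edist_triangle
      _ ≤ 1 + n := add_le_add (edist_le_one_iff_adj_or_eq.2 (Or.inl hadj)) (ih _)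
      _ = (n + 1 : ℕ) := by push_cast; ring

lemma pathGraph_degree_le_two {k : ℕ} (i : Fin k) : (pathGraph k).degree i ≤ 2 := by
  rw [← card_neighborFinset_eq_degree, ← card_map Fin.valEmbedding]
  refine (card_le_card fun n hn => ?_).trans (card_le_two (a := i.val - 1) (b := i.val + 1))
  obtain ⟨j, hj, rfl⟩ := mem_map.1 hn
  rw [mem_neighborFinset, pathGraph_adj] at hj
  simp only [Fin.valEmbedding_apply, mem_insert, mem_singleton]
  omega

lemma pathGraph_degree_zero_le_one {k : ℕ} [NeZero k] : (pathGraph k).degree 0 ≤ 1 := by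
  rw [← card_neighborFinset_eq_degree, ← card_map Fin.valEmbedding]
  refine (card_le_card fun n hn => ?_).trans (card_singleton 1).le
  obtain ⟨j, hj, rfl⟩ := mem_map.1 hn
  rw [mem_neighborFinset, pathGraph_adj, Fin.val_zero] at hj
  simp only [Fin.valEmbedding_apply, mem_singleton]
  omega

end SimpleGraph

section HGraph

open SimpleGraph

variable {k : ℕ} [NeZero k]

lemma hGraph_degree_inl_le {d : ℕ} (i : Fin k) :
    (HGraph k (d + 1)).degree (Sum.inl i) ≤ (pathGraph k).degree i + 1 := by
  unfold degree
  rw [← card_map (Function.Embedding.inl (α := Fin k) (β := Fin k × HVertex d k))]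
  refine (card_le_card fun w hw => ?_).trans
    (card_insert_le (α := HVertex (d + 1) k) (Sum.inr (i, HRoot d k)) _)
  replace hw := (mem_neighborFinset _ _ _).1 hw
  rcases w with j | ⟨j, x⟩
  · exact mem_insert_of_mem (mem_map_of_mem _ ((mem_neighborFinset _ _ _).2 hw))
  · obtain ⟨rfl, rfl⟩ := hw
    exact mem_insert_self _ _

lemma hGraph_degree_inr_le {d : ℕ} (i : Fin k) (x : HVertex d k) :
    (HGraph k (d + 1)).degree (Sum.inr (i, x)) ≤
      (HGraph k d).degree x + if x = HRoot d k then 1 else 0 := by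
  let copy : HVertex d k ↪ HVertex (d + 1) k :=
    ⟨fun y => Sum.inr (i, y), fun y z h => (Prod.ext_iff.1 (Sum.inr_injective h)).2⟩
  have hsub : (HGraph k (d + 1)).neighborFinset (Sum.inr (i, x)) ⊆
      ((HGraph k d).neighborFinset x).map copy ∪ if x = HRoot d k then {Sum.inl i} else ∅ := by
    intro w hw
    replace hw := (mem_neighborFinset _ _ _).1 hw
    rcases w with j | ⟨j, y⟩
    · obtain ⟨rfl, rfl⟩ := hw
      exact mem_union_right _ (by rw [if_pos rfl]; exact mem_singleton_self _)
    · obtain ⟨rfl, hw⟩ := hw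
      exact mem_union_left _ (mem_map_of_mem copy ((mem_neighborFinset _ _ _).2 hw))
  refine (card_le_card hsub).trans ((card_union_le _ _).trans ?_)
  rw [card_map, card_neighborFinset_eq_degree]
  split_ifs
  · exact add_le_add_right (card_singleton _).le _
  · simp

/-- The root bound is what keeps the degree of a copy's root at `3` once it is joined to the
path above it. -/
lemma hGraph_degree_le (d : ℕ) :
    (HGraph k d).degree (HRoot d k) ≤ 2 ∧ ∀ u, (HGraph k d).degree u ≤ 3 := by
  induction d with
  | zero =>
    exact ⟨pathGraph_degree_zero_le_one.trans (by norm_num),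
      fun u => (pathGraph_degree_le_two u).trans (by norm_num)⟩
  | succ d ih =>
    refine ⟨(hGraph_degree_inl_le 0).trans (by simpa using pathGraph_degree_zero_le_one), ?_⟩
    rintro (i | ⟨i, x⟩)
    · have := pathGraph_degree_le_two i
      exact (hGraph_degree_inl_le i).trans (by omega)
    · refine (hGraph_degree_inr_le i x).trans ?_
      split_ifs with hx
      · exact hx ▸ Nat.add_le_add_right ih.1 1
      · simpa using ih.2 x

def hGraphTopPath (d : ℕ) : pathGraph k →g HGraph k (d + 1) :=
  ⟨Sum.inl, fun h => h⟩

def hGraphCopy (d : ℕ) (i : Fin k) : HGraph k d →g HGraph k (d + 1) :=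
  ⟨fun x => Sum.inr (i, x), fun h => ⟨rfl, h⟩⟩

lemma hGraph_edist_root_add_one_le (d : ℕ) (u : HVertex d k) :
    (HGraph k d).edist u (HRoot d k) + 1 ≤ (d + 1) * k := by
  induction d with
  | zero =>
    calc (pathGraph k).edist u 0 + 1 ≤ (u.val : ℕ∞) + 1 := by
          gcongr; exact pathGraph_edist_zero_le u
      _ ≤ (0 + 1) * k := by norm_cast; omega
  | succ d ih =>
    have htop (i : Fin k) : (HGraph k (d + 1)).edist (Sum.inl i) (HRoot (d + 1) k) ≤ i.val :=
      ((hGraphTopPath d).edist_le i 0).trans (pathGraph_edist_zero_le i)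
    rcases u with i | ⟨i, x⟩
    · calc (HGraph k (d + 1)).edist (Sum.inl i) (HRoot (d + 1) k) + 1 ≤ (i.val : ℕ∞) + 1 := by
            gcongr; exact htop i
        _ ≤ (d + 1 + 1) * k := by norm_cast; nlinarith [i.isLt]
    · have hedge : (HGraph k (d + 1)).Adj (Sum.inr (i, HRoot d k)) (Sum.inl i) := ⟨rfl, rfl⟩
      calc (HGraph k (d + 1)).edist (Sum.inr (i, x)) (HRoot (d + 1) k) + 1
          ≤ (HGraph k (d + 1)).edist (Sum.inr (i, x)) (Sum.inr (i, HRoot d k)) +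
              (HGraph k (d + 1)).edist (Sum.inr (i, HRoot d k)) (Sum.inl i) +
              (HGraph k (d + 1)).edist (Sum.inl i) (HRoot (d + 1) k) + 1 := by
            gcongr
            rw [add_assoc]
            exact SimpleGraph.edist_triangle.trans (add_le_add le_rfl SimpleGraph.edist_triangle)
        _ ≤ (HGraph k d).edist x (HRoot d k) + 1 + i.val + 1 := by
            gcongr
            · exact (hGraphCopy d i).edist_le x (HRoot d k)
            · exact edist_le_one_iff_adj_or_eq.2 (Or.inl hedge)
            · exact htop i
        _ = ((HGraph k d).edist x (HRoot d k) + 1) + (i.val + 1 : ℕ) := by push_cast; ring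
        _ ≤ (d + 1) * k + k := add_le_add (ih x) (by exact_mod_cast i.isLt)
        _ = (d + 1 + 1) * k := by ring

lemma hGraph_ediam_le (d : ℕ) : (HGraph k d).ediam ≤ (2 * ((d + 1) * k - 1) : ℕ) := by
  have hecc : (HGraph k d).eccent (HRoot d k) ≤ ((d + 1) * k - 1 : ℕ) :=
    (eccent_le_iff _ _).2 fun u => by
      rw [edist_comm, ENat.natCast_sub]
      exact ENat.le_sub_of_add_le_right ENat.one_ne_top
        (by exact_mod_cast hGraph_edist_root_add_one_le d u)
  calc (HGraph k d).ediam ≤ 2 * (HGraph k d).eccent (HRoot d k) := ediam_le_two_mul_eccent _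
    _ ≤ 2 * ((d + 1) * k - 1 : ℕ) := by gcongr
    _ = (2 * ((d + 1) * k - 1) : ℕ) := by norm_cast

end HGraph

lemma card_hVertex_mul_add (d k : ℕ) :
    Fintype.card (HVertex d k) * (k - 1) + k = k ^ (d + 2) := by
  induction d with
  | zero =>
    change Fintype.card (Fin k) * (k - 1) + k = k ^ 2
    rw [Fintype.card_fin]
    rcases k with _ | m
    · rfl
    · rw [Nat.add_sub_cancel]; ring
  | succ d ih =>
    have hcard : Fintype.card (HVertex (d + 1) k) = k + k * Fintype.card (HVertex d k) := by
      change Fintype.card (Fin k ⊕ Fin k × HVertex d k) = _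
      rw [Fintype.card_sum, Fintype.card_prod, Fintype.card_fin]
    rcases k with _ | m
    · simp
    · rw [hcard, pow_succ, ← ih]
      simp only [Nat.add_sub_cancel]
      ring

lemma card_hVertex_mul_le {k : ℕ} (hk : 2 ≤ k) (d : ℕ) :
    Fintype.card (HVertex d k) * ((d + 1) * k - 1) ≤ (d + 1) * (2 * d + 1) * k ^ (d + 2) := by
  obtain ⟨m, rfl⟩ : ∃ m, k = m + 2 := ⟨k - 2, by omega⟩
  have hcard := card_hVertex_mul_add d (m + 2)
  rw [show m + 2 - 1 = m + 1 from rfl] at hcard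
  have hdiam : (d + 1) * (m + 2) - 1 ≤ (2 * d + 1) * (m + 1) := by
    rw [Nat.sub_le_iff_le_add]; nlinarith
  set n := Fintype.card (HVertex d (m + 2))
  calc n * ((d + 1) * (m + 2) - 1) ≤ n * ((2 * d + 1) * (m + 1)) := by gcongr
    _ = (2 * d + 1) * (n * (m + 1)) := by ring
    _ ≤ (2 * d + 1) * (m + 2) ^ (d + 2) := by gcongr; exact hcard ▸ Nat.le_add_right _ _
    _ ≤ (d + 1) * ((2 * d + 1) * (m + 2) ^ (d + 2)) := Nat.le_mul_of_pos_left _ d.succ_pos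
    _ = (d + 1) * (2 * d + 1) * (m + 2) ^ (d + 2) := by ring

/-- For all integers `d ≥ 1` and `k ≥ 3`, the condition number
`χ(H_{d,k}) = λ_max(L(H_{d,k}))/λ_min⁺(L(H_{d,k}))` satisfies
`χ(H_{d,k}) ≤ 6·d·(2d−1)·k^(d+1)`. -/
theorem hgraph_condition_number_bound (d k : ℕ) (hd : 1 ≤ d) (hk : 3 ≤ k) [NeZero k] :
    ∀ lammax lammin : ℝ,
      IsMaxEigenvalue ((HGraph k (d - 1)).lapMatrix ℝ) lammax →
      IsMinPosEigenvalue ((HGraph k (d - 1)).lapMatrix ℝ) lammin →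
      lammax / lammin ≤ 6 * (d : ℝ) * (2 * (d : ℝ) - 1) * (k : ℝ) ^ (d + 1) := by
  intro lammax lammin hmax hmin
  obtain ⟨δ, rfl⟩ : ∃ δ, d = δ + 1 := ⟨d - 1, by omega⟩
  rw [Nat.add_sub_cancel] at hmax hmin
  have : Nonempty (HVertex δ k) := ⟨HRoot δ k⟩
  have hdiam_pos : 0 < 2 * ((δ + 1) * k - 1) := by
    have : k ≤ (δ + 1) * k := Nat.le_mul_of_pos_left k δ.succ_pos
    omega
  calc lammax / lammin ≤ 3 * Fintype.card (HVertex δ k) * ((2 * ((δ + 1) * k - 1) : ℕ) : ℝ) :=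
        lapMatrix_eigenvalue_ratio_le hmax hmin (hGraph_degree_le δ).2 (hGraph_ediam_le δ)
          hdiam_pos
    _ = 6 * ((Fintype.card (HVertex δ k) * ((δ + 1) * k - 1) : ℕ) : ℝ) := by push_cast; ring
    _ ≤ 6 * (((δ + 1) * (2 * δ + 1) * k ^ (δ + 2) : ℕ) : ℝ) := by
        gcongr 6 * ?_; exact_mod_cast card_hVertex_mul_le (by omega) δ
    _ = 6 * ((δ + 1 : ℕ) : ℝ) * (2 * ((δ + 1 : ℕ) : ℝ) - 1) * (k : ℝ) ^ (δ + 1 + 1) := by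
        push_cast; ring
end

section
/- For L > μ > 0, the function F : ℓ² → ℝ defined by F(x) = (μ/2)·‖x‖² + ((L−μ)/4)·[(x₁ − 1)² + ∑_{k=1}^∞ (x_k − x_{k+1})²] has a unique minimizer x* ∈ ℓ², given coordinatewise by x*_p = q^p for all p ≥ 1, where q = (√(2L/μ − 1) − 1)/(√(2L/μ − 1) + 1) ∈ (0,1); equivalently, q is the unique root in (0,1) of the equation μ·q = ((L−μ)/2)·(1−q)². -/
/-!
With `S` the left shift, `F(x) = (μ/2)‖x‖² + ((L-μ)/4)((x₀ - 1)² + ‖x - Sx‖²)` is quadratic, so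
`F(x* + h) = F(x*) + δ(h) + (μ/2)‖h‖² + ((L-μ)/4)(h₀² + ‖h - Sh‖²)` with `δ` linear.
For the geometric sequence `x* = (q, q², …)` we have `S x* = q x*` and
`q⟪x*, Sh⟫ = ⟪x*, h⟫ - q h₀`, which turn `q δ(h)` into `(μq - ((L-μ)/2)(1-q)²)⟪x*, h⟫`.
This vanishes exactly when `q` solves the quadratic equation, and then
`F(y) ≥ F(x*) + (μ/2)‖y - x*‖²` gives both minimality and uniqueness.
-/

open scoped RealInnerProductSpace

local notation "ℓ²" => lp (fun _ : ℕ => ℝ) 2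

theorem Memℓp.comp_succ {E : Type*} [NormedAddCommGroup E] {p : ENNReal} (hp : 0 < p.toReal)
    {f : ℕ → E} (hf : Memℓp f p) : Memℓp (fun k => f (k + 1)) p :=
  memℓp_gen (((memℓp_gen_iff hp).1 hf).comp_injective (add_left_injective 1))

namespace ell2

def shift (x : ℓ²) : ℓ² := ⟨fun k => x (k + 1), x.2.comp_succ (by norm_num)⟩

@[simp] theorem shift_apply (x : ℓ²) (k : ℕ) : shift x k = x (k + 1) := rfl

theorem shift_add (x y : ℓ²) : shift (x + y) = shift x + shift y := by
  ext k; simp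

theorem norm_sq_eq_tsum (x : ℓ²) : ‖x‖ ^ 2 = ∑' k, x k ^ 2 := by
  rw [← real_inner_self_eq_norm_sq, lp.inner_eq_tsum]
  simp [sq]

def geom (q : ℝ) (hq : |q| < 1) : ℓ² :=
  ⟨fun k => q ^ (k + 1), memℓp_gen <| by
    have hq2 : |q| ^ 2 < 1 := by rwa [sq_lt_one_iff_abs_lt_one, abs_abs]
    simp only [Real.norm_eq_abs, abs_pow, ENNReal.toReal_ofNat, Real.rpow_two]
    exact ((summable_geometric_of_lt_one (by positivity) hq2).mul_left (|q| ^ 2)).congr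
      fun k => by ring⟩

variable {q : ℝ} (hq : |q| < 1)

@[simp] theorem geom_apply (k : ℕ) : geom q hq k = q ^ (k + 1) := rfl

theorem shift_geom : shift (geom q hq) = q • geom q hq := by
  ext k; simp [pow_succ']

theorem inner_geom_shift (h : ℓ²) :
    q * ⟪geom q hq, shift h⟫ = ⟪geom q hq, h⟫ - q * h 0 := by
  rw [lp.inner_eq_tsum, lp.inner_eq_tsum, (lp.summable_inner (𝕜 := ℝ) _ h).tsum_eq_zero_add,
    ← tsum_mul_left]
  simp only [geom_apply, pow_succ, shift_apply, RCLike.inner_apply, Real.ringHom_apply, zero_add,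
    pow_zero, one_mul]
  rw [mul_comm (h 0) q, add_sub_cancel_left]
  exact tsum_congr fun k => by ring

end ell2

open ell2

noncomputable def lowerBoundFun (L μ : ℝ) (x : ℓ²) : ℝ :=
  μ / 2 * ‖x‖ ^ 2 + (L - μ) / 4 * ((x 0 - 1) ^ 2 + ‖x - shift x‖ ^ 2)

section lowerBoundFun

variable (L μ : ℝ)

theorem lowerBoundFun_eq_tsum (x : ℓ²) :
    lowerBoundFun L μ x =
      μ / 2 * ‖x‖ ^ 2 + (L - μ) / 4 * ((x 0 - 1) ^ 2 + ∑' k, (x k - x (k + 1)) ^ 2) := by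
  rw [lowerBoundFun, norm_sq_eq_tsum (x - shift x)]
  rfl

theorem lowerBoundFun_add (x h : ℓ²) :
    lowerBoundFun L μ (x + h) = lowerBoundFun L μ x +
      (μ * ⟪x, h⟫ + (L - μ) / 2 * ((x 0 - 1) * h 0 + ⟪x - shift x, h - shift h⟫)) +
      (μ / 2 * ‖h‖ ^ 2 + (L - μ) / 4 * (h 0 ^ 2 + ‖h - shift h‖ ^ 2)) := by
  have hdiff : x + h - shift (x + h) = (x - shift x) + (h - shift h) := by
    rw [shift_add]; abel
  simp only [lowerBoundFun, hdiff, norm_add_sq_real, lp.coeFn_add, Pi.add_apply]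
  ring

variable {L μ} {q : ℝ} (hq : |q| < 1)

theorem lowerBoundFun_geom_add (hq0 : q ≠ 0) (hroot : μ * q = (L - μ) / 2 * (1 - q) ^ 2)
    (h : ℓ²) :
    lowerBoundFun L μ (geom q hq + h) = lowerBoundFun L μ (geom q hq) +
      (μ / 2 * ‖h‖ ^ 2 + (L - μ) / 4 * (h 0 ^ 2 + ‖h - shift h‖ ^ 2)) := by
  set x := geom q hq
  have hdiff : x - shift x = (1 - q) • x := by rw [shift_geom, sub_smul, one_smul]
  have hlin : q * (μ * ⟪x, h⟫ +
      (L - μ) / 2 * ((x 0 - 1) * h 0 + ⟪x - shift x, h - shift h⟫)) = 0 := by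
    rw [hdiff, real_inner_smul_left, inner_sub_right]
    simp only [x, geom_apply, zero_add, pow_one]
    linear_combination ⟪x, h⟫ * hroot - (L - μ) / 2 * (1 - q) * inner_geom_shift hq h
  rw [lowerBoundFun_add, (mul_eq_zero.1 hlin).resolve_left hq0, add_zero]

theorem lowerBoundFun_geom_add_sq_le (hμL : μ ≤ L) (hq0 : q ≠ 0)
    (hroot : μ * q = (L - μ) / 2 * (1 - q) ^ 2) (y : ℓ²) :
    lowerBoundFun L μ (geom q hq) + μ / 2 * ‖y - geom q hq‖ ^ 2 ≤ lowerBoundFun L μ y := by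
  have hexp := lowerBoundFun_geom_add hq hq0 hroot (y - geom q hq)
  rw [add_sub_cancel] at hexp
  have hrest : 0 ≤ (L - μ) / 4 *
      ((y - geom q hq) 0 ^ 2 + ‖y - geom q hq - shift (y - geom q hq)‖ ^ 2) :=
    mul_nonneg (by linarith) (by positivity)
  linarith

end lowerBoundFun

section ratio

variable {L μ : ℝ}

theorem eq_of_root_of_lt_one (hμ : 0 < μ) (hμL : μ ≤ L) {r s : ℝ} (hr : r < 1) (hs : s < 1)
    (hr' : μ * r = (L - μ) / 2 * (1 - r) ^ 2) (hs' : μ * s = (L - μ) / 2 * (1 - s) ^ 2) :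
    r = s := by
  have hfactor : (r - s) * (μ + (L - μ) / 2 * (2 - r - s)) = 0 := by
    linear_combination hr' - hs'
  have hpos : 0 < μ + (L - μ) / 2 * (2 - r - s) := by nlinarith
  linarith [(mul_eq_zero.1 hfactor).resolve_right hpos.ne']

theorem sqrt_ratio_spec (hμ : 0 < μ) (hμL : μ < L) {q : ℝ}
    (hq : q = (√(2 * L / μ - 1) - 1) / (√(2 * L / μ - 1) + 1)) :
    0 < q ∧ q < 1 ∧ μ * q = (L - μ) / 2 * (1 - q) ^ 2 := by
  set s := √(2 * L / μ - 1)
  have hs2 : μ * s ^ 2 = 2 * L - μ := by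
    rw [Real.sq_sqrt (by rw [le_sub_iff_add_le, le_div_iff₀ hμ]; linarith)]
    field_simp
  have hs1 : 1 < s := by
    refine (one_lt_sq_iff₀ (Real.sqrt_nonneg _)).1 (lt_of_mul_lt_mul_left ?_ hμ.le)
    linarith
  subst hq
  refine ⟨div_pos (by linarith) (by linarith), (div_lt_one (by linarith)).2 (by linarith), ?_⟩
  field_simp
  linear_combination 2 * hs2

end ratio

/-- For `L > μ > 0`, the function
`F(x) = (μ/2)‖x‖² + ((L−μ)/4)[(x₁ − 1)² + ∑_{k≥1} (x_k − x_{k+1})²]` on `ℓ²`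
(coordinates are indexed from `0` here, so the `0`-th coordinate is `x₁`) has a unique
minimizer `x*`, given coordinatewise by `x*_p = q^p` for `p ≥ 1`, where
`q = (√(2L/μ − 1) − 1)/(√(2L/μ − 1) + 1) ∈ (0,1)` is the unique root in `(0,1)` of
`μq = ((L−μ)/2)(1 − q)²`. -/
theorem lower_bound_function_unique_minimizer (L μ : ℝ) (hμ : 0 < μ) (hμL : μ < L)
    (F : lp (fun _ : ℕ => ℝ) 2 → ℝ)
    (hF : ∀ x : lp (fun _ : ℕ => ℝ) 2,
      F x = μ / 2 * ‖x‖ ^ 2 +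
        (L - μ) / 4 * ((x 0 - 1) ^ 2 + ∑' k : ℕ, (x k - x (k + 1)) ^ 2))
    (q : ℝ)
    (hq : q = (Real.sqrt (2 * L / μ - 1) - 1) / (Real.sqrt (2 * L / μ - 1) + 1)) :
    0 < q ∧ q < 1 ∧
    μ * q = (L - μ) / 2 * (1 - q) ^ 2 ∧
    (∀ r : ℝ, 0 < r → r < 1 → μ * r = (L - μ) / 2 * (1 - r) ^ 2 → r = q) ∧
    ∃ xstar : lp (fun _ : ℕ => ℝ) 2,
      (∀ p : ℕ, xstar p = q ^ (p + 1)) ∧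
      (∀ y, F xstar ≤ F y) ∧
      (∀ z : lp (fun _ : ℕ => ℝ) 2, (∀ y, F z ≤ F y) → z = xstar) := by
  obtain ⟨hq0, hq1, hroot⟩ := sqrt_ratio_spec hμ hμL hq
  obtain rfl : F = lowerBoundFun L μ :=
    funext fun x => (hF x).trans (lowerBoundFun_eq_tsum L μ x).symm
  have hqabs : |q| < 1 := abs_lt.2 ⟨by linarith, hq1⟩
  have hgrowth := lowerBoundFun_geom_add_sq_le hqabs hμL.le hq0.ne' hroot
  refine ⟨hq0, hq1, hroot, fun r _ hr1 hr => eq_of_root_of_lt_one hμ hμL.le hr1 hq1 hr hroot,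
    geom q hqabs, geom_apply hqabs, fun y => ?_, fun z hz => ?_⟩
  · linarith [hgrowth y, mul_nonneg hμ.le (sq_nonneg ‖y - geom q hqabs‖)]
  · have hsmall : μ / 2 * ‖z - geom q hqabs‖ ^ 2 ≤ 0 := by
      linarith [hgrowth z, hz (geom q hqabs)]
    rw [← sub_eq_zero, ← norm_eq_zero, ← sq_eq_zero_iff]
    exact le_antisymm (nonpos_of_mul_nonpos_right hsmall (by positivity)) (sq_nonneg _)
end

section
/- For all reals κ_l ≥ 1 and κ_g with κ_g ≥ 2(κ_l − 1)/5 + 1, it holds that (√κ_g − 1)/(√κ_g + 1) ≥ 1 − √10/√κ_l. -/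
/-- If `κ_l ≥ 1` and `κ_g ≥ 2(κ_l − 1)/5 + 1`, then
`(√κ_g − 1)/(√κ_g + 1) ≥ 1 − √10/√κ_l`. -/
theorem kappa_inequality_logarithmic_regime (κl κg : ℝ) (hκl : 1 ≤ κl)
    (hκg : κg ≥ 2 * (κl - 1) / 5 + 1) :
    (Real.sqrt κg - 1) / (Real.sqrt κg + 1) ≥ 1 - Real.sqrt 10 / Real.sqrt κl := by
  have hκg1 : (1:ℝ) ≤ κg := by nlinarith
  have ha2 : Real.sqrt κg ^ 2 = κg := Real.sq_sqrt (by linarith)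
  have hb2 : Real.sqrt κl ^ 2 = κl := Real.sq_sqrt (by linarith)
  have hc2 : Real.sqrt 10 ^ 2 = 10 := Real.sq_sqrt (by norm_num)
  have ha1 : 1 ≤ Real.sqrt κg := by
    rw [show (1:ℝ) = Real.sqrt 1 by simp]; exact Real.sqrt_le_sqrt hκg1
  have hb1 : 1 ≤ Real.sqrt κl := by
    rw [show (1:ℝ) = Real.sqrt 1 by simp]; exact Real.sqrt_le_sqrt hκl
  have hc0 : 0 ≤ Real.sqrt 10 := Real.sqrt_nonneg _
  set a := Real.sqrt κg
  set b := Real.sqrt κl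
  set c := Real.sqrt 10
  have key : 2 * b ≤ c * (a + 1) := by
    have hsq : (2 * b) ^ 2 ≤ (c * (a + 1)) ^ 2 := by nlinarith
    exact le_of_pow_le_pow_left₀ two_ne_zero (by positivity) hsq
  rw [ge_iff_le, sub_le_iff_le_add, ← sub_le_iff_le_add']
  have h1 : 1 - (a - 1) / (a + 1) = 2 / (a + 1) := by
    field_simp
    ring
  rw [h1, div_le_div_iff₀ (by linarith) (by linarith)]
  linarith
end
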